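/- arXiv:2207.10601 — 5 statements merged into one kernel-verified Lean document; each statement's English description precedes it below -/
import Mathlib

section
/- The function s(z) = sin(πz²/2)/z² (extended entirely at 0) belongs to the Fock space F^p for every 1 ≤ p < ∞, i.e., ∫_ℂ |s(z)|^p e^{-pπ|z|²/2} dA(z) < ∞. -/
set_option maxHeartbeats 1000000

open MeasureTheory Real

/-! Auxiliary bounds on the complex sine function. -/

lemma stmt6_sinh_bound (x : ℝ) : |Real.sinh x| ≤ |x| * Real.exp |x| := by
  rw [Real.abs_sinh]
  set t := |x| with ht
  have ht0 : 0 ≤ t := abs_nonneg x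
  have h1 : Real.sinh t = (Real.exp t - Real.exp (-t)) / 2 := Real.sinh_eq t
  have h2 : (-(2*t)) + 1 ≤ Real.exp (-(2*t)) := Real.add_one_le_exp _
  have h3 : Real.exp (-(2*t)) = Real.exp (-t) * Real.exp (-t) := by
    rw [← Real.exp_add]; ring_nf
  have h4 : Real.exp (-t) * Real.exp t = 1 := by rw [← Real.exp_add]; simp
  have h5 : (0:ℝ) < Real.exp t := Real.exp_pos t
  have h6 : (0:ℝ) < Real.exp (-t) := Real.exp_pos _
  nlinarith

lemma stmt6_cosh_bound (x : ℝ) : Real.cosh x ≤ Real.exp |x| := by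
  rw [Real.cosh_eq]
  have h1 : Real.exp x ≤ Real.exp |x| := Real.exp_le_exp.mpr (le_abs_self x)
  have h2 : Real.exp (-x) ≤ Real.exp |x| := Real.exp_le_exp.mpr (neg_le_abs x)
  linarith

lemma stmt6_sin_decomp (w : ℂ) : Complex.sin w =
    ↑(Real.sin w.re * Real.cosh w.im) + ↑(Real.cos w.re * Real.sinh w.im) * Complex.I := by
  rw [Complex.sin_eq]; push_cast; ring

lemma stmt6_abs_sin_le_exp (w : ℂ) : ‖Complex.sin w‖ ≤ Real.exp |w.im| := by
  rw [stmt6_sin_decomp, Complex.norm_add_mul_I]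
  have h := stmt6_cosh_bound w.im
  have hc : 0 < Real.cosh w.im := Real.cosh_pos _
  have h1 : Real.sin w.re ^ 2 + Real.cos w.re ^ 2 = 1 := Real.sin_sq_add_cos_sq _
  have h2 : Real.cosh w.im ^ 2 = Real.sinh w.im ^ 2 + 1 := Real.cosh_sq _
  calc Real.sqrt ((Real.sin w.re * Real.cosh w.im)^2 + (Real.cos w.re * Real.sinh w.im)^2)
      ≤ Real.sqrt ((Real.exp |w.im|)^2) := by
        apply Real.sqrt_le_sqrt; nlinarith [Real.exp_pos |w.im|]
    _ = Real.exp |w.im| := Real.sqrt_sq (Real.exp_pos _).le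

lemma stmt6_abs_sin_le_mul_exp (w : ℂ) :
    ‖Complex.sin w‖ ≤ ‖w‖ * Real.exp |w.im| := by
  rw [stmt6_sin_decomp, Complex.norm_add_mul_I]
  have h := stmt6_cosh_bound w.im
  have hs := stmt6_sinh_bound w.im
  have hc : 0 < Real.cosh w.im := Real.cosh_pos _
  have h1 : Real.sin w.re ^ 2 ≤ w.re ^ 2 := Real.sin_sq_le_sq
  have h1' : |Real.cos w.re| ≤ 1 := Real.abs_cos_le_one _
  have habs : ‖w‖ = Real.sqrt (w.re^2 + w.im^2) := by
    rw [Complex.norm_def, Complex.normSq_apply]; ring_nf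
  rw [habs]
  have hE : 0 < Real.exp |w.im| := Real.exp_pos _
  calc Real.sqrt ((Real.sin w.re * Real.cosh w.im)^2 + (Real.cos w.re * Real.sinh w.im)^2)
      ≤ Real.sqrt ((w.re^2 + w.im^2) * (Real.exp |w.im|)^2) := by
        apply Real.sqrt_le_sqrt
        have hb : (Real.cos w.re * Real.sinh w.im)^2 ≤ w.im^2 * (Real.exp |w.im|)^2 := by
          have ha1 : (Real.cos w.re * Real.sinh w.im)^2 ≤ Real.sinh w.im ^ 2 := by
            nlinarith [sq_nonneg (Real.sinh w.im), Real.cos_sq_le_one w.re]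
          have h2 : Real.sinh w.im ^2 ≤ (|w.im| * Real.exp |w.im|)^2 := by
            nlinarith [abs_nonneg (Real.sinh w.im), sq_abs (Real.sinh w.im),
              abs_nonneg w.im]
          calc (Real.cos w.re * Real.sinh w.im)^2 ≤ Real.sinh w.im ^2 := ha1
            _ ≤ (|w.im| * Real.exp |w.im|)^2 := h2
            _ = w.im^2 * (Real.exp |w.im|)^2 := by rw [mul_pow, sq_abs]
        have ha : (Real.sin w.re * Real.cosh w.im)^2 ≤ w.re^2 * (Real.exp |w.im|)^2 := by
          have hcosh2 : Real.cosh w.im ^ 2 ≤ (Real.exp |w.im|)^2 := by nlinarith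
          nlinarith [mul_le_mul_of_nonneg_right h1 (sq_nonneg (Real.cosh w.im)),
            mul_le_mul_of_nonneg_left hcosh2 (sq_nonneg w.re)]
        nlinarith
    _ = Real.sqrt (w.re^2 + w.im^2) * Real.exp |w.im| := by
        rw [Real.sqrt_mul (by positivity), Real.sqrt_sq hE.le]

/-! Integrability of the comparison function. -/

noncomputable def stmt6Lm : (ℝ × ℝ) →ₗ[ℝ] ℝ × ℝ :=
  (LinearMap.fst ℝ ℝ ℝ - LinearMap.snd ℝ ℝ ℝ).prod (LinearMap.fst ℝ ℝ ℝ + LinearMap.snd ℝ ℝ ℝ)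

lemma stmt6_comp_sub_add (F G : ℝ → ℝ) (hF : Continuous F) (hG : Continuous G)
    (h : Integrable (fun q : ℝ × ℝ => F q.1 * G q.2)) :
    Integrable (fun q : ℝ × ℝ => F (q.1 - q.2) * G (q.1 + q.2)) := by
  have hdet : LinearMap.det stmt6Lm = 2 := by
    rw [← LinearMap.det_toMatrix (Module.Basis.finTwoProd ℝ), Matrix.det_fin_two]
    simp [LinearMap.toMatrix_apply, stmt6Lm, Module.Basis.finTwoProd]
    norm_num
  have hmap : (volume : Measure (ℝ×ℝ)).map stmt6Lm = ENNReal.ofReal |(2:ℝ)⁻¹| • volume := by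
    rw [Measure.map_linearMap_addHaar_eq_smul_addHaar _ (by rw [hdet]; norm_num), hdet]
  have hmeas : Measurable stmt6Lm := stmt6Lm.continuous_of_finiteDimensional.measurable
  have hasm : AEStronglyMeasurable (fun q : ℝ × ℝ => F q.1 * G q.2) (volume.map stmt6Lm) :=
    ((hF.comp continuous_fst).mul (hG.comp continuous_snd)).aestronglyMeasurable
  have h2 : Integrable (fun q : ℝ × ℝ => F q.1 * G q.2) (volume.map stmt6Lm) := by
    rw [hmap]
    exact h.smul_measure ENNReal.ofReal_ne_top
  rw [integrable_map_measure hasm hmeas.aemeasurable] at h2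
  convert h2 using 2 with q
  rfl

lemma stmt6_bound_integrable (p : ℝ) (hp : 1 ≤ p) :
    Integrable (fun z : ℂ =>
      Real.exp (-(p*Real.pi/2)*(z.re - z.im)^2) * (1 + (z.re + z.im)^2/2) ^ (-p) +
      Real.exp (-(p*Real.pi/2)*(z.re + z.im)^2) * (1 + (z.re - z.im)^2/2) ^ (-p)) := by
  set F : ℝ → ℝ := fun t => Real.exp (-(p*Real.pi/2)*t^2) with hFdef
  set G : ℝ → ℝ := fun t => (1 + t^2/2) ^ (-p) with hGdef
  have hp0 : (0:ℝ) < p := lt_of_lt_of_le one_pos hp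
  have hFc : Continuous F := by rw [hFdef]; continuity
  have hGc : Continuous G := by
    rw [hGdef]
    apply Continuous.rpow_const
    · continuity
    · intro x; left; positivity
  have hFi : Integrable F := by
    rw [hFdef]
    simpa [neg_mul, mul_assoc] using
      integrable_exp_neg_mul_sq (show (0:ℝ) < p * Real.pi / 2 by positivity)
  have hGi : Integrable G := by
    apply (integrable_inv_one_add_sq.const_mul 2).mono' hGc.aestronglyMeasurable
    filter_upwards with t
    have hb : (1:ℝ) ≤ 1 + t^2/2 := by nlinarith [sq_nonneg t]
    rw [Real.norm_of_nonneg (Real.rpow_nonneg (by positivity) _)]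
    have h1 : (1 + t^2/2 : ℝ) ^ (-p) ≤ (1 + t^2/2) ^ (-1:ℝ) :=
      Real.rpow_le_rpow_of_exponent_le hb (by linarith)
    have h2 : ((1:ℝ) + t^2/2) ^ (-1:ℝ) = (1 + t^2/2)⁻¹ := Real.rpow_neg_one _
    have e1 : ((1:ℝ) + t^2/2)⁻¹ = 2/(2+t^2) := by
      rw [inv_eq_one_div, div_eq_div_iff (by positivity) (by positivity)]
      ring
    have h3 : (2:ℝ)/(2+t^2) ≤ 2*(1+t^2)⁻¹ := by
      rw [← div_eq_mul_inv]
      gcongr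
      linarith [sq_nonneg t]
    calc G t ≤ (1 + t^2/2)⁻¹ := by rw [hGdef]; simpa [h2] using h1
      _ = 2/(2+t^2) := e1
      _ ≤ 2 * (1+t^2)⁻¹ := h3
  have hprod : Integrable (fun q : ℝ × ℝ => F q.1 * G q.2) := hFi.mul_prod hGi
  have h1 := stmt6_comp_sub_add F G hFc hGc hprod
  have h2' := stmt6_comp_sub_add G F hGc hFc (hGi.mul_prod hFi)
  have h2 : Integrable (fun q : ℝ × ℝ => F (q.1 + q.2) * G (q.1 - q.2)) := by
    simpa [mul_comm] using h2'
  have hsum := h1.add h2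
  have hfin := (Complex.volume_preserving_equiv_real_prod.integrable_comp_emb
      Complex.measurableEquivRealProd.measurableEmbedding).mpr hsum
  convert hfin using 2 with z
  all_goals rfl

theorem stmt6 (p : ℝ) (hp : 1 ≤ p) :
    MeasureTheory.Integrable (fun z : ℂ =>
      ‖Complex.sin ((Real.pi : ℂ) * z ^ 2 / 2) / z ^ 2‖ ^ p *
        Real.exp (-(p * Real.pi / 2) * ‖z‖ ^ 2)) := by
  have hp0 : (0:ℝ) < p := lt_of_lt_of_le one_pos hp
  have hpi := Real.pi_pos
  have hB := (stmt6_bound_integrable p hp).const_mul (Real.pi ^ p)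
  apply hB.mono'
  · -- measurability
    apply Measurable.aestronglyMeasurable
    have hsq : Measurable (fun z : ℂ => z ^ 2) := measurable_id.pow_const 2
    apply Measurable.mul
    · apply (Real.continuous_rpow_const hp0.le).measurable.comp
      apply continuous_norm.measurable.comp
      exact (Complex.continuous_sin.measurable.comp
        ((hsq.const_mul _).div_const 2)).div hsq
    · exact (Real.continuous_exp.comp
        ((continuous_const.mul (continuous_norm.pow 2)))).measurable
  · filter_upwards with z
    set x := z.re with hx
    set y := z.im with hy
    set w : ℂ := (Real.pi : ℂ) * z ^ 2 / 2 with hw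
    have hxy : ‖z‖^2 = x^2 + y^2 := by
      rw [Complex.sq_norm, Complex.normSq_apply]
      ring
    have him : w.im = Real.pi * (x*y) := by
      simp [hw, Complex.div_im, Complex.mul_im, Complex.mul_re, pow_two]
      ring
    have habsim : |w.im| = Real.pi * |x*y| := by
      rw [him, abs_mul, abs_of_pos hpi]
    have habsw : ‖w‖ = Real.pi/2 * (x^2+y^2) := by
      rw [hw, norm_div, norm_mul, Complex.norm_real, Real.norm_eq_abs, norm_pow, Complex.norm_two,
        abs_of_pos hpi, ← hxy]
      ring
    have hRHSnn : 0 ≤ Real.pi ^ p *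
        (Real.exp (-(p*Real.pi/2)*(x - y)^2) * (1 + (x + y)^2/2) ^ (-p) +
         Real.exp (-(p*Real.pi/2)*(x + y)^2) * (1 + (x - y)^2/2) ^ (-p)) := by
      have e1 : (0:ℝ) ≤ (1 + (x + y)^2/2) ^ (-p) := Real.rpow_nonneg (by positivity) _
      have e2 : (0:ℝ) ≤ (1 + (x - y)^2/2) ^ (-p) := Real.rpow_nonneg (by positivity) _
      have e3 : (0:ℝ) ≤ Real.pi ^ p := Real.rpow_nonneg hpi.le _
      positivity
    rw [Real.norm_of_nonneg (by positivity)]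
    rcases eq_or_ne z 0 with rfl | hz
    · simp only [ne_eq, OfNat.ofNat_ne_zero, not_false_eq_true, zero_pow, div_zero,
        map_zero, norm_zero]
      rw [Real.zero_rpow hp0.ne', zero_mul]
      exact hRHSnn
    -- z ≠ 0
    have habsz : 0 < ‖z‖ := by
      simpa [norm_pos_iff] using hz
    have hs : 0 < x^2 + y^2 := by rw [← hxy]; positivity
    have hdiv : ‖Complex.sin w / z^2‖
        = ‖Complex.sin w‖ / (x^2+y^2) := by
      rw [norm_div, norm_pow, hxy]
    have claim1 : ‖Complex.sin w / z^2‖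
        ≤ Real.pi * (1+(x^2+y^2))⁻¹ * Real.exp (Real.pi*|x*y|) := by
      rcases le_total (x^2+y^2) 1 with hle | hge
      · -- small z
        have h1 : ‖Complex.sin w‖
            ≤ (Real.pi/2 * (x^2+y^2)) * Real.exp (Real.pi*|x*y|) := by
          simpa [habsw, habsim] using stmt6_abs_sin_le_mul_exp w
        rw [hdiv, div_le_iff₀ hs]
        have hkey : Real.pi/2 * (x^2+y^2) ≤
            Real.pi * (1+(x^2+y^2))⁻¹ * (x^2+y^2) := by
          have hinv : (1:ℝ)/2 ≤ (1+(x^2+y^2))⁻¹ := by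
            rw [div_le_iff₀ (by norm_num : (0:ℝ) < 2)]
            rw [inv_mul_eq_div, le_div_iff₀ (by positivity)]
            linarith
          nlinarith [mul_le_mul_of_nonneg_left hinv
            (show (0:ℝ) ≤ Real.pi * (x^2+y^2) by positivity)]
        calc ‖Complex.sin w‖
            ≤ (Real.pi/2 * (x^2+y^2)) * Real.exp (Real.pi*|x*y|) := h1
          _ ≤ (Real.pi * (1+(x^2+y^2))⁻¹ * (x^2+y^2)) * Real.exp (Real.pi*|x*y|) :=
              mul_le_mul_of_nonneg_right hkey (Real.exp_pos _).le
          _ = Real.pi * (1+(x^2+y^2))⁻¹ * Real.exp (Real.pi*|x*y|) * (x^2+y^2) := by ring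
      · -- large z
        have h1 : ‖Complex.sin w‖ ≤ Real.exp (Real.pi*|x*y|) := by
          simpa [habsim] using stmt6_abs_sin_le_exp w
        rw [hdiv, div_le_iff₀ hs]
        have hkey : (1:ℝ) ≤ Real.pi * (1+(x^2+y^2))⁻¹ * (x^2+y^2) := by
          have hpi2 : (2:ℝ) ≤ Real.pi := by nlinarith [Real.pi_gt_three]
          have h15 : 1 + (x^2+y^2) ≤ Real.pi * (x^2+y^2) := by nlinarith
          have hinv0 : (0:ℝ) ≤ (1+(x^2+y^2))⁻¹ := by positivity
          calc (1:ℝ) = (1+(x^2+y^2))⁻¹ * (1+(x^2+y^2)) :=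
                (inv_mul_cancel₀ (show (0:ℝ) < 1+(x^2+y^2) by positivity).ne').symm
            _ ≤ (1+(x^2+y^2))⁻¹ * (Real.pi * (x^2+y^2)) :=
                mul_le_mul_of_nonneg_left h15 hinv0
            _ = Real.pi * (1+(x^2+y^2))⁻¹ * (x^2+y^2) := by ring
        calc ‖Complex.sin w‖ ≤ Real.exp (Real.pi*|x*y|) := h1
          _ ≤ (Real.pi * (1+(x^2+y^2))⁻¹ * (x^2+y^2)) * Real.exp (Real.pi*|x*y|) :=
              le_mul_of_one_le_left (Real.exp_pos _).le hkey
          _ = Real.pi * (1+(x^2+y^2))⁻¹ * Real.exp (Real.pi*|x*y|) * (x^2+y^2) := by ring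
    -- raise to power p and multiply by the Gaussian factor
    have step : ‖Complex.sin w / z^2‖ ^ p
          * Real.exp (-(p * Real.pi / 2) * ‖z‖ ^ 2)
        ≤ Real.pi ^ p * ((1+(x^2+y^2)) ^ (-p)
            * Real.exp (p*(Real.pi*|x*y| - Real.pi/2*(x^2+y^2)))) := by
      have hr := Real.rpow_le_rpow (norm_nonneg _) claim1 hp0.le
      have hE : (0:ℝ) < Real.exp (-(p * Real.pi / 2) * ‖z‖ ^ 2) :=
        Real.exp_pos _
      calc ‖Complex.sin w / z^2‖ ^ p
            * Real.exp (-(p * Real.pi / 2) * ‖z‖ ^ 2)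
          ≤ (Real.pi * (1+(x^2+y^2))⁻¹ * Real.exp (Real.pi*|x*y|)) ^ p
            * Real.exp (-(p * Real.pi / 2) * ‖z‖ ^ 2) :=
            mul_le_mul_of_nonneg_right hr hE.le
        _ = Real.pi ^ p * ((1+(x^2+y^2)) ^ (-p)
              * Real.exp (p*(Real.pi*|x*y| - Real.pi/2*(x^2+y^2)))) := by
            rw [Real.mul_rpow (by positivity) (Real.exp_pos _).le,
              Real.mul_rpow hpi.le (by positivity),
              Real.inv_rpow (by positivity), ← Real.rpow_neg (by positivity),
              ← Real.exp_mul, hxy]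
            rw [mul_assoc, mul_assoc, ← Real.exp_add]
            ring_nf
    refine le_trans step ?_
    apply mul_le_mul_of_nonneg_left ?_ (Real.rpow_nonneg hpi.le _)
    -- claim2
    rcases le_total 0 (x*y) with hsgn | hsgn
    · have hexp : Real.exp (p*(Real.pi*|x*y| - Real.pi/2*(x^2+y^2)))
          = Real.exp (-(p*Real.pi/2)*(x - y)^2) := by
        rw [abs_of_nonneg hsgn]; congr 1; ring
      have hG : (1+(x^2+y^2)) ^ (-p) ≤ (1 + (x + y)^2/2) ^ (-p) := by
        rw [Real.rpow_neg (by positivity), Real.rpow_neg (by positivity)]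
        apply inv_anti₀ (Real.rpow_pos_of_pos (by positivity) _)
        apply Real.rpow_le_rpow (by positivity) ?_ hp0.le
        nlinarith [sq_nonneg (x-y)]
      have hpos2 : 0 ≤ Real.exp (-(p*Real.pi/2)*(x + y)^2) * (1 + (x - y)^2/2) ^ (-p) := by
        have := Real.rpow_nonneg (show (0:ℝ) ≤ 1 + (x-y)^2/2 by positivity) (-p)
        positivity
      rw [hexp]
      calc (1+(x^2+y^2)) ^ (-p) * Real.exp (-(p*Real.pi/2)*(x - y)^2)
          ≤ (1 + (x + y)^2/2) ^ (-p) * Real.exp (-(p*Real.pi/2)*(x - y)^2) :=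
            mul_le_mul_of_nonneg_right hG (Real.exp_pos _).le
        _ ≤ _ := by rw [mul_comm]; exact le_add_of_nonneg_right hpos2
    · have hexp : Real.exp (p*(Real.pi*|x*y| - Real.pi/2*(x^2+y^2)))
          = Real.exp (-(p*Real.pi/2)*(x + y)^2) := by
        rw [abs_of_nonpos hsgn]; congr 1; ring
      have hG : (1+(x^2+y^2)) ^ (-p) ≤ (1 + (x - y)^2/2) ^ (-p) := by
        rw [Real.rpow_neg (by positivity), Real.rpow_neg (by positivity)]
        apply inv_anti₀ (Real.rpow_pos_of_pos (by positivity) _)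
        apply Real.rpow_le_rpow (by positivity) ?_ hp0.le
        nlinarith [sq_nonneg (x+y)]
      have hpos2 : 0 ≤ Real.exp (-(p*Real.pi/2)*(x - y)^2) * (1 + (x + y)^2/2) ^ (-p) := by
        have := Real.rpow_nonneg (show (0:ℝ) ≤ 1 + (x+y)^2/2 by positivity) (-p)
        positivity
      rw [hexp]
      calc (1+(x^2+y^2)) ^ (-p) * Real.exp (-(p*Real.pi/2)*(x + y)^2)
          ≤ (1 + (x - y)^2/2) ^ (-p) * Real.exp (-(p*Real.pi/2)*(x + y)^2) :=
            mul_le_mul_of_nonneg_right hG (Real.exp_pos _).le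
        _ ≤ _ := by rw [mul_comm]; exact le_add_of_nonneg_left hpos2
end

section
/- Let p ≥ 1, α, β ∈ ℝ, and consider I = ∫_{|z|>1} (1+|z|)^{-p(β−2α)} (1+|Im z²|)^{-pα} exp(−(pπ/2)(|z|² − |Im z²|)) dA(z). Then I < ∞ if and only if β > 1/p. -/
open MeasureTheory Set Real



-- polynomial vs exponential, explicit
lemma aux_pow_le_exp (n : ℕ) (lam d : ℝ) (hlam : 0 < lam) (hn : lam ≤ n) (hd : 0 ≤ d) :
    (1 + d) ^ n ≤ ((n : ℝ) / lam) ^ n * Real.exp (lam * d) := by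
  have h1 : (1:ℝ) ≤ (n : ℝ) / lam := (one_le_div hlam).2 hn
  have h2 : 1 + lam * d / n ≤ Real.exp (lam * d / n) := by
    have := Real.add_one_le_exp (lam * d / n); linarith
  have hn0 : (0:ℝ) < n := lt_of_lt_of_le hlam hn
  have h3 : 1 + d ≤ (n / lam) * Real.exp (lam * d / n) := by
    have : ((n:ℝ) / lam) * (1 + lam * d / n) = n / lam + d := by field_simp
    nlinarith [mul_le_mul_of_nonneg_left h2 (le_trans zero_le_one h1)]
  calc (1 + d) ^ n ≤ ((n / lam) * Real.exp (lam * d / n)) ^ n := by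
        apply pow_le_pow_left₀ (by linarith) h3 n
    _ = ((n : ℝ) / lam) ^ n * Real.exp (lam * d) := by
        rw [mul_pow, ← Real.exp_nat_mul]
        congr 2
        field_simp

lemma rpow_exp_bound (k lam : ℝ) (hk : 0 ≤ k) (hlam : 0 < lam) :
    ∃ C : ℝ, 0 < C ∧ ∀ d : ℝ, 0 ≤ d → (1 + d) ^ k ≤ C * Real.exp (lam * d) := by
  set n : ℕ := ⌈k⌉₊ + ⌈lam⌉₊ + 1 with hn
  have hkn : k ≤ n := by
    have := Nat.le_ceil k
    push_cast [hn]; linarith [Nat.cast_nonneg (α := ℝ) ⌈lam⌉₊]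
  have hlamn : lam ≤ n := by
    have := Nat.le_ceil lam
    push_cast [hn]; linarith [Nat.cast_nonneg (α := ℝ) ⌈k⌉₊]
  refine ⟨((n : ℝ) / lam) ^ n, by positivity, fun d hd => ?_⟩
  calc (1 + d) ^ k ≤ (1 + d) ^ (n : ℝ) :=
        Real.rpow_le_rpow_of_exponent_le (by linarith) hkn
    _ = (1 + d) ^ n := Real.rpow_natCast _ _
    _ ≤ ((n : ℝ) / lam) ^ n * Real.exp (lam * d) := aux_pow_le_exp n lam d hlam hlamn hd

lemma integrable_one_add_abs_rpow {q : ℝ} (hq : 1 < q) :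
    Integrable (fun x : ℝ => (1 + |x|) ^ (-q)) := by
  have h : ((Module.finrank ℝ ℝ : ℝ)) < q := by
    simp [Module.finrank_self]; exact hq
  simpa [Real.norm_eq_abs] using integrable_one_add_norm (E := ℝ) h

-- algebraic factor identity
lemma factor_eq (a b r m : ℝ) (hr : 0 ≤ r) (hm : 0 ≤ m) :
    (1 + r) ^ (-(b - 2 * a)) * (1 + m) ^ (-a)
      = (1 + r) ^ (-b) * ((1 + r) ^ 2 / (1 + m)) ^ a := by
  have h1 : (0:ℝ) < 1 + r := by linarith
  have h2 : (0:ℝ) < 1 + m := by linarith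
  rw [Real.div_rpow (by positivity) h2.le, ← Real.rpow_natCast (1+r) 2,
    ← Real.rpow_mul h1.le]
  rw [div_eq_mul_inv, ← Real.rpow_neg h2.le, ← mul_assoc, ← Real.rpow_add h1]
  push_cast
  ring_nf

lemma Q_bounds (r m d : ℝ) (hr : 0 ≤ r) (hm : 0 ≤ m) (hmd : m + d = r ^ 2) (hd0 : 0 ≤ d) :
    1 ≤ (1 + r) ^ 2 / (1 + m) ∧ (1 + r) ^ 2 / (1 + m) ≤ 2 * (1 + d) := by
  have h2 : (0:ℝ) < 1 + m := by linarith
  constructor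
  · rw [le_div_iff₀ h2]; nlinarith
  · rw [div_le_iff₀ h2]; nlinarith [sq_nonneg (1 - r), mul_nonneg hm hd0]

lemma rpow_between {Q s M : ℝ} (hQ1 : 1 ≤ Q) (hQM : Q ≤ M) (hM : 1 ≤ M) :
    M ^ (-|s|) ≤ Q ^ s ∧ Q ^ s ≤ M ^ |s| := by
  have hQ0 : (0:ℝ) < Q := lt_of_lt_of_le one_pos hQ1
  rcases le_or_gt 0 s with hs | hs
  · rw [abs_of_nonneg hs]
    constructor
    · calc M ^ (-s) ≤ 1 := Real.rpow_le_one_of_one_le_of_nonpos hM (by linarith)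
        _ = Q ^ (0:ℝ) := (Real.rpow_zero Q).symm
        _ ≤ Q ^ s := Real.rpow_le_rpow_of_exponent_le hQ1 hs
    · exact Real.rpow_le_rpow hQ0.le hQM hs
  · rw [abs_of_neg hs]
    constructor
    · rw [neg_neg]; exact Real.rpow_le_rpow_of_nonpos hQ0 hQM hs.le
    · calc Q ^ s ≤ 1 := Real.rpow_le_one_of_one_le_of_nonpos hQ1 hs.le
        _ = M ^ (0:ℝ) := (Real.rpow_zero M).symm
        _ ≤ M ^ (-s) := Real.rpow_le_rpow_of_exponent_le hM (by linarith)



lemma G_continuous (p α β c : ℝ) :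
    Continuous (fun q : ℝ × ℝ => (1 + Real.sqrt (q.1^2 + q.2^2)) ^ (-(p*(β-2*α))) *
      (1 + |q.1^2 - q.2^2|) ^ (-(p*α)) *
      Real.exp (-c * ((q.1^2+q.2^2) - |q.1^2 - q.2^2|))) := by
  have c1 : Continuous (fun q : ℝ × ℝ => q.1^2 + q.2^2) := by fun_prop
  have c2 : Continuous (fun q : ℝ × ℝ => |q.1^2 - q.2^2|) := by fun_prop
  apply Continuous.mul
  apply Continuous.mul
  · apply Continuous.rpow_const (by fun_prop)
    intro q
    left
    have := Real.sqrt_nonneg (q.1^2 + q.2^2)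
    positivity
  · apply Continuous.rpow_const (by fun_prop)
    intro q
    left
    have := abs_nonneg (q.1^2 - q.2^2)
    positivity
  · fun_prop

lemma G_integrable (p α β c : ℝ) (hc : 0 < c) (hq : 1 < p * β) :
    Integrable (fun q : ℝ × ℝ => (1 + Real.sqrt (q.1^2 + q.2^2)) ^ (-(p*(β-2*α))) *
      (1 + |q.1^2 - q.2^2|) ^ (-(p*α)) *
      Real.exp (-c * ((q.1^2+q.2^2) - |q.1^2 - q.2^2|))) := by
  obtain ⟨C, hC, hCb⟩ := rpow_exp_bound |p*α| (c/2) (abs_nonneg _) (by linarith)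
  set K : ℝ := 2 ^ |p*α| * C with hK
  have hK0 : 0 < K := by positivity
  have hHint : Integrable (fun q : ℝ × ℝ =>
      K * ((1+|q.1|) ^ (-(p*β)) * Real.exp (-c*q.2^2))
        + K * (Real.exp (-c*q.1^2) * (1+|q.2|) ^ (-(p*β)))) := by
    rw [show (volume : Measure (ℝ × ℝ)) = (volume : Measure ℝ).prod volume from
      (Measure.volume_eq_prod ℝ ℝ)]
    exact ((Integrable.mul_prod (integrable_one_add_abs_rpow hq)
        (integrable_exp_neg_mul_sq hc)).const_mul K).add
      ((Integrable.mul_prod (integrable_exp_neg_mul_sq hc)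
        (integrable_one_add_abs_rpow hq)).const_mul K)
  apply hHint.mono (G_continuous p α β c).aestronglyMeasurable
  filter_upwards with q
  obtain ⟨x, y⟩ := q
  simp only
  set r := Real.sqrt (x^2+y^2) with hrdef
  set m := |x^2 - y^2| with hmdef
  set d := x^2 + y^2 - m with hddef
  have hr0 : 0 ≤ r := Real.sqrt_nonneg _
  have hr2 : r^2 = x^2 + y^2 := Real.sq_sqrt (by positivity)
  have hm0 : 0 ≤ m := abs_nonneg _
  have hmle : m ≤ x^2 + y^2 := by
    rw [hmdef, abs_le]; constructor <;> nlinarith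
  have hd0 : 0 ≤ d := by simp [hddef]; linarith
  have hmd : m + d = r^2 := by rw [hr2]; ring
  have hxr : |x| ≤ r := by
    rw [hrdef, ← Real.sqrt_sq_eq_abs]
    exact Real.sqrt_le_sqrt (by nlinarith)
  have hyr : |y| ≤ r := by
    rw [hrdef, ← Real.sqrt_sq_eq_abs]
    exact Real.sqrt_le_sqrt (by nlinarith)
  have hrpos : (0:ℝ) < 1 + r := by linarith
  obtain ⟨hQ1, hQ2⟩ := Q_bounds r m d hr0 hm0 hmd hd0
  -- main middle bound
  have key : (1 + r) ^ (-(p*(β-2*α))) * (1 + m) ^ (-(p*α)) * Real.exp (-c * d)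
      ≤ (1+r) ^ (-(p*β)) * (K * Real.exp (-(c/2) * d)) := by
    have hexp : -(p*(β-2*α)) = -(p*β - 2*(p*α)) := by ring
    rw [hexp, factor_eq (p*α) (p*β) r m hr0 hm0]
    have hA0 : (0:ℝ) ≤ (1+r) ^ (-(p*β)) := Real.rpow_nonneg hrpos.le _
    have h1 : ((1+r)^2/(1+m)) ^ (p*α) ≤ 2 ^ |p*α| * (1+d) ^ |p*α| := by
      calc ((1+r)^2/(1+m)) ^ (p*α) ≤ (2*(1+d)) ^ |p*α| :=
            (rpow_between hQ1 hQ2 (by linarith)).2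
        _ = 2 ^ |p*α| * (1+d) ^ |p*α| := Real.mul_rpow (by norm_num) (by linarith)
    have h2 : (1+d) ^ |p*α| * Real.exp (-c*d) ≤ C * Real.exp (-(c/2)*d) := by
      calc (1+d) ^ |p*α| * Real.exp (-c*d)
          ≤ (C * Real.exp (c/2*d)) * Real.exp (-c*d) :=
            mul_le_mul_of_nonneg_right (hCb d hd0) (Real.exp_pos _).le
        _ = C * Real.exp (-(c/2)*d) := by
            rw [mul_assoc, ← Real.exp_add]; ring_nf
    calc (1+r) ^ (-(p*β)) * ((1+r)^2/(1+m)) ^ (p*α) * Real.exp (-c*d)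
        ≤ (1+r) ^ (-(p*β)) * (2 ^ |p*α| * (1+d) ^ |p*α|) * Real.exp (-c*d) := by
          apply mul_le_mul_of_nonneg_right _ (Real.exp_pos _).le
          exact mul_le_mul_of_nonneg_left h1 hA0
      _ = (1+r) ^ (-(p*β)) * 2 ^ |p*α| * ((1+d) ^ |p*α| * Real.exp (-c*d)) := by ring
      _ ≤ (1+r) ^ (-(p*β)) * 2 ^ |p*α| * (C * Real.exp (-(c/2)*d)) := by
          apply mul_le_mul_of_nonneg_left h2
          positivity
      _ = (1+r) ^ (-(p*β)) * (K * Real.exp (-(c/2)*d)) := by rw [hK]; ring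
  have hGnn : 0 ≤ (1 + r) ^ (-(p*(β-2*α))) * (1 + m) ^ (-(p*α)) * Real.exp (-c * d) := by
    have h2 : (0:ℝ) < 1 + m := by linarith
    positivity
  rw [Real.norm_eq_abs, Real.norm_eq_abs, abs_of_nonneg hGnn, abs_of_nonneg]
  · -- case split
    rcases le_total (x^2) (y^2) with hxy | hxy
    · have hdx : d = 2 * x^2 := by
        rw [hddef, hmdef, abs_of_nonpos (by linarith)]; ring
      have hb : (1+r) ^ (-(p*β)) ≤ (1+|y|) ^ (-(p*β)) := by
        apply Real.rpow_le_rpow_of_nonpos (by positivity) (by linarith) (by nlinarith)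
      have : (1+r) ^ (-(p*β)) * (K * Real.exp (-(c/2)*d))
          ≤ K * (Real.exp (-c*x^2) * (1+|y|) ^ (-(p*β))) := by
        have he : Real.exp (-(c/2)*d) = Real.exp (-c*x^2) := by rw [hdx]; ring_nf
        rw [he]
        calc (1+r) ^ (-(p*β)) * (K * Real.exp (-c*x^2))
            ≤ (1+|y|) ^ (-(p*β)) * (K * Real.exp (-c*x^2)) :=
              mul_le_mul_of_nonneg_right hb (by positivity)
          _ = K * (Real.exp (-c*x^2) * (1+|y|) ^ (-(p*β))) := by ring
      have hpos1 : 0 ≤ K * ((1+|x|) ^ (-(p*β)) * Real.exp (-c*y^2)) := by positivity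
      linarith [le_trans key this]
    · have hdy : d = 2 * y^2 := by
        rw [hddef, hmdef, abs_of_nonneg (by linarith)]; ring
      have hb : (1+r) ^ (-(p*β)) ≤ (1+|x|) ^ (-(p*β)) := by
        apply Real.rpow_le_rpow_of_nonpos (by positivity) (by linarith) (by nlinarith)
      have : (1+r) ^ (-(p*β)) * (K * Real.exp (-(c/2)*d))
          ≤ K * ((1+|x|) ^ (-(p*β)) * Real.exp (-c*y^2)) := by
        have he : Real.exp (-(c/2)*d) = Real.exp (-c*y^2) := by rw [hdy]; ring_nf
        rw [he]
        calc (1+r) ^ (-(p*β)) * (K * Real.exp (-c*y^2))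
            ≤ (1+|x|) ^ (-(p*β)) * (K * Real.exp (-c*y^2)) :=
              mul_le_mul_of_nonneg_right hb (by positivity)
          _ = K * ((1+|x|) ^ (-(p*β)) * Real.exp (-c*y^2)) := by ring
      have hpos2 : 0 ≤ K * (Real.exp (-c*x^2) * (1+|y|) ^ (-(p*β))) := by positivity
      linarith [le_trans key this]
  · positivity



lemma G_not_integrable (p α β c : ℝ) (hc : 0 < c) (hq : p * β ≤ 1) :
    ¬ IntegrableOn (fun q : ℝ × ℝ => (1 + Real.sqrt (q.1^2 + q.2^2)) ^ (-(p*(β-2*α))) *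
      (1 + |q.1^2 - q.2^2|) ^ (-(p*α)) *
      Real.exp (-c * ((q.1^2+q.2^2) - |q.1^2 - q.2^2|)))
      {q : ℝ × ℝ | 1 < Real.sqrt (q.1^2 + q.2^2)} := by
  set G : ℝ × ℝ → ℝ := fun q => (1 + Real.sqrt (q.1^2 + q.2^2)) ^ (-(p*(β-2*α))) *
      (1 + |q.1^2 - q.2^2|) ^ (-(p*α)) *
      Real.exp (-c * ((q.1^2+q.2^2) - |q.1^2 - q.2^2|)) with hGdef
  intro hI
  set κ : ℝ := 3 ^ (-|p*β|) * (6:ℝ) ^ (-|p*α|) * Real.exp (-(2*c)) with hκdef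
  have hκ : 0 < κ := by positivity
  -- lower bound on the strip
  have hlow : ∀ x ∈ Ioi (2:ℝ), ∀ y ∈ Ioc (0:ℝ) 1, κ * x ^ (-(p*β)) ≤ G (x, y) := by
    intro x hx y hy
    simp only [mem_Ioi] at hx
    obtain ⟨hy0, hy1⟩ := hy
    set r := Real.sqrt (x^2+y^2) with hrdef
    have hr0 : 0 ≤ r := Real.sqrt_nonneg _
    have hr2 : r^2 = x^2 + y^2 := Real.sq_sqrt (by positivity)
    have hy2 : y^2 ≤ 1 := by nlinarith
    have hx2 : 4 ≤ x^2 := by nlinarith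
    have hm : |x^2 - y^2| = x^2 - y^2 := abs_of_nonneg (by nlinarith)
    have hd : x^2 + y^2 - |x^2 - y^2| = 2*y^2 := by rw [hm]; ring
    have hxr : x ≤ r := by
      have h := Real.sqrt_le_sqrt (show x^2 ≤ x^2+y^2 by nlinarith)
      rwa [Real.sqrt_sq (by linarith : (0:ℝ) ≤ x)] at h
    have hr3 : 1 + r ≤ 3*x := by
      have h := Real.sqrt_le_sqrt (show x^2+y^2 ≤ (2*x)^2 by nlinarith)
      rw [Real.sqrt_sq (by linarith : (0:ℝ) ≤ 2*x)] at h
      linarith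
    have hGeq : G (x, y) = (1+r) ^ (-(p*β)) * ((1+r)^2/(1+(x^2-y^2))) ^ (p*α)
        * Real.exp (-c * (2*y^2)) := by
      simp only [hGdef]
      rw [hm, show x^2+y^2-(x^2-y^2) = 2*y^2 from by ring, ← hrdef,
        show -(p*(β-2*α)) = -(p*β - 2*(p*α)) from by ring,
        factor_eq (p*α) (p*β) r (x^2-y^2) hr0 (by nlinarith)]
    rw [hGeq]
    -- three factor-wise lower bounds
    obtain ⟨hQ1, hQ2⟩ := Q_bounds r (x^2-y^2) (2*y^2) hr0 (by nlinarith) (by rw [hr2]; ring)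
      (by positivity)
    have hQ6 : (1+r)^2/(1+(x^2-y^2)) ≤ 6 := le_trans hQ2 (by nlinarith)
    have hf2 : (6:ℝ) ^ (-|p*α|) ≤ ((1+r)^2/(1+(x^2-y^2))) ^ (p*α) :=
      (rpow_between hQ1 hQ6 (by norm_num)).1
    have hf3 : Real.exp (-(2*c)) ≤ Real.exp (-c * (2*y^2)) := by
      apply Real.exp_le_exp.2; nlinarith
    have hf1 : 3 ^ (-|p*β|) * x ^ (-(p*β)) ≤ (1+r) ^ (-(p*β)) := by
      set t := (1+r)/x with htdef
      have hx0 : (0:ℝ) < x := by linarith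
      have ht1 : 1 ≤ t := by rw [htdef, le_div_iff₀ hx0]; linarith
      have ht3 : t ≤ 3 := by rw [htdef, div_le_iff₀ hx0]; linarith
      have htx : 1 + r = x * t := by rw [htdef]; field_simp
      have hts := (rpow_between (s := -(p*β)) ht1 ht3 (by norm_num)).1
      rw [abs_neg] at hts
      calc 3 ^ (-|p*β|) * x ^ (-(p*β)) ≤ t ^ (-(p*β)) * x ^ (-(p*β)) :=
            mul_le_mul_of_nonneg_right hts (Real.rpow_nonneg hx0.le _)
        _ = (1+r) ^ (-(p*β)) := by
            rw [htx, Real.mul_rpow hx0.le (by linarith : (0:ℝ) ≤ t)]; ring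
    calc κ * x ^ (-(p*β))
        = (3 ^ (-|p*β|) * x ^ (-(p*β))) * (6:ℝ) ^ (-|p*α|) * Real.exp (-(2*c)) := by
          rw [hκdef]; ring
      _ ≤ (1+r) ^ (-(p*β)) * ((1+r)^2/(1+(x^2-y^2))) ^ (p*α) * Real.exp (-c * (2*y^2)) := by
          have h1 : (0:ℝ) ≤ 3 ^ (-|p*β|) * x ^ (-(p*β)) := by positivity
          have h2 : (0:ℝ) ≤ (6:ℝ) ^ (-|p*α|) := by positivity
          have h3 : (0:ℝ) ≤ (1+r) ^ (-(p*β)) := Real.rpow_nonneg (by linarith) _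
          have h4 : (0:ℝ) ≤ ((1+r)^2/(1+(x^2-y^2))) ^ (p*α) := le_trans (by positivity) hf2
          apply mul_le_mul (mul_le_mul hf1 hf2 h2 h3) hf3 (Real.exp_pos _).le
          positivity
  -- restrict to the strip
  have hsub : (Ioi (2:ℝ) ×ˢ Ioc (0:ℝ) 1) ⊆ {q : ℝ × ℝ | 1 < Real.sqrt (q.1^2 + q.2^2)} := by
    rintro ⟨x, y⟩ ⟨hx, hy⟩
    simp only [mem_Ioi] at hx
    simp only [mem_setOf_eq]
    have h := Real.sqrt_le_sqrt (show x^2 ≤ x^2+y^2 by nlinarith)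
    rw [Real.sqrt_sq (by linarith : (0:ℝ) ≤ x)] at h
    linarith
  have hR : IntegrableOn G (Ioi (2:ℝ) ×ˢ Ioc (0:ℝ) 1) := hI.mono_set hsub
  rw [IntegrableOn, Measure.volume_eq_prod, ← Measure.prod_restrict] at hR
  have hmeas : AEStronglyMeasurable G
      ((volume.restrict (Ioi (2:ℝ))).prod (volume.restrict (Ioc (0:ℝ) 1))) :=
    (G_continuous p α β c).aestronglyMeasurable
  obtain ⟨h1, h2⟩ := (integrable_prod_iff hmeas).1 hR
  have hbound : ∀ᵐ x ∂(volume.restrict (Ioi (2:ℝ))),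
      ‖κ * x ^ (-(p*β))‖ ≤ ∫ y, ‖G (x, y)‖ ∂(volume.restrict (Ioc (0:ℝ) 1)) := by
    filter_upwards [h1, ae_restrict_mem measurableSet_Ioi] with x hx hx2
    have hxpos : (0:ℝ) < x := lt_trans two_pos hx2
    have hnn : (0:ℝ) ≤ κ * x ^ (-(p*β)) := by positivity
    rw [Real.norm_eq_abs, abs_of_nonneg hnn]
    calc κ * x ^ (-(p*β)) = ∫ _y in Ioc (0:ℝ) 1, κ * x ^ (-(p*β)) := by
          rw [setIntegral_const]
          simp [Real.volume_Ioc]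
      _ ≤ ∫ y in Ioc (0:ℝ) 1, ‖G (x, y)‖ := by
          apply setIntegral_mono_on (integrableOn_const (by simp [Real.volume_Ioc]))
            hx.norm measurableSet_Ioc
          intro y hy
          exact le_trans (hlow x hx2 y hy) (le_abs_self _)
  have hmeas2 : AEStronglyMeasurable (fun x : ℝ => κ * x ^ (-(p*β)))
      (volume.restrict (Ioi (2:ℝ))) := by
    apply ContinuousOn.aestronglyMeasurable _ measurableSet_Ioi
    intro x hx
    have hx0 : x ≠ 0 := by simp only [mem_Ioi] at hx; linarith
    exact (continuousAt_const.mul (Real.continuousAt_rpow_const x _ (Or.inl hx0))).continuousWithinAt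
  have hint : Integrable (fun x : ℝ => κ * x ^ (-(p*β))) (volume.restrict (Ioi (2:ℝ))) :=
    h2.mono' hmeas2 hbound
  have hint2 : IntegrableOn (fun x : ℝ => x ^ (-(p*β))) (Ioi (2:ℝ)) := by
    have := hint.const_mul κ⁻¹
    simpa only [IntegrableOn, ← mul_assoc, inv_mul_cancel₀ hκ.ne', one_mul] using this
  rw [integrableOn_Ioi_rpow_iff two_pos] at hint2
  linarith



theorem stmt11 (p α β : ℝ) (hp : 1 ≤ p) :
    MeasureTheory.IntegrableOn (fun z : ℂ =>
      (1 + ‖z‖) ^ (-(p * (β - 2 * α))) * (1 + |(z ^ 2).im|) ^ (-(p * α)) *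
        Real.exp (-(p * Real.pi / 2) * ((‖z‖) ^ 2 - |(z ^ 2).im|)))
      {z : ℂ | 1 < ‖z‖} ↔ 1 / p < β := by
  have hp0 : 0 < p := lt_of_lt_of_le one_pos hp
  have hc : 0 < p * Real.pi / 2 := by positivity
  set ω : Circle := Circle.exp (Real.pi/4) with hω
  have hω2 : (ω : ℂ)^2 = Complex.I := by
    rw [hω, Circle.coe_exp, sq, ← Complex.exp_add,
      show ((Real.pi/4 : ℝ) : ℂ) * Complex.I + ((Real.pi/4 : ℝ) : ℂ) * Complex.I
        = ((Real.pi/2 : ℝ) : ℂ) * Complex.I from by push_cast; ring,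
      Complex.exp_mul_I, ← Complex.ofReal_cos, ← Complex.ofReal_sin,
      Real.cos_pi_div_two, Real.sin_pi_div_two]
    simp
  have hrot : MeasurePreserving (⇑(rotation ω)) volume volume :=
    (rotation ω).measurePreserving
  have hemb : MeasurableEmbedding (⇑(rotation ω)) :=
    (rotation ω).toHomeomorph.measurableEmbedding
  rw [← hrot.integrableOn_comp_preimage hemb]
  have hpre : (⇑(rotation ω)) ⁻¹' {z : ℂ | 1 < ‖z‖} = {z : ℂ | 1 < ‖z‖} := by
    ext z
    simp [rotation_apply, Circle.norm_coe]
  rw [hpre]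
  have hpres : MeasurePreserving (⇑(Complex.measurableEquivRealProd.symm))
      volume volume :=
    Complex.volume_preserving_equiv_real_prod.symm Complex.measurableEquivRealProd
  rw [← hpres.integrableOn_comp_preimage Complex.measurableEquivRealProd.symm.measurableEmbedding]
  have hset : (⇑(Complex.measurableEquivRealProd.symm)) ⁻¹' {z : ℂ | 1 < ‖z‖}
      = {q : ℝ × ℝ | 1 < Real.sqrt (q.1^2 + q.2^2)} := by
    ext ⟨x, y⟩
    simp only [mem_preimage, mem_setOf_eq, Complex.measurableEquivRealProd_symm_apply,
      Complex.norm_def, Complex.normSq_mk]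
    rw [show x*x + y*y = x^2 + y^2 from by ring]
  rw [hset]
  have hfun : ((fun z : ℂ =>
      (1 + ‖z‖) ^ (-(p * (β - 2 * α))) * (1 + |(z ^ 2).im|) ^ (-(p * α)) *
        Real.exp (-(p * Real.pi / 2) * ((‖z‖) ^ 2 - |(z ^ 2).im|)))
        ∘ ⇑(rotation ω)) ∘ ⇑(Complex.measurableEquivRealProd.symm)
      = fun q : ℝ × ℝ => (1 + Real.sqrt (q.1^2 + q.2^2)) ^ (-(p*(β-2*α))) *
        (1 + |q.1^2 - q.2^2|) ^ (-(p*α)) *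
        Real.exp (-(p * Real.pi / 2) * ((q.1^2+q.2^2) - |q.1^2 - q.2^2|)) := by
    funext q
    obtain ⟨x, y⟩ := q
    simp only [Function.comp_apply, Complex.measurableEquivRealProd_symm_apply, rotation_apply]
    set z : ℂ := ⟨x, y⟩ with hz
    have habs : ‖(ω : ℂ) * z‖ = Real.sqrt (x^2 + y^2) := by
      rw [norm_mul, Circle.norm_coe, one_mul, Complex.norm_def, hz, Complex.normSq_mk,
        show x*x + y*y = x^2 + y^2 from by ring]
    have him : (((ω : ℂ) * z) ^ 2).im = x^2 - y^2 := by
      rw [mul_pow, hω2, Complex.mul_im, Complex.I_re, Complex.I_im, sq, Complex.mul_re, hz]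
      simp
      ring
    have habs2 : (‖(ω : ℂ) * z‖)^2 = x^2 + y^2 := by
      rw [habs]
      exact Real.sq_sqrt (by positivity)
    rw [habs2, habs, him]
  rw [hfun]
  constructor
  · intro h
    by_contra hβ
    push_neg at hβ
    have hq : p * β ≤ 1 := by
      have h2 := mul_le_mul_of_nonneg_left hβ hp0.le
      rwa [mul_one_div, div_self hp0.ne'] at h2
    exact G_not_integrable p α β (p * Real.pi / 2) hc hq h
  · intro hβ
    have hq : 1 < p * β := by
      rw [div_lt_iff₀ hp0] at hβ
      linarith
    exact (G_integrable p α β (p * Real.pi / 2) hc hq).integrableOn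
end

section
/- Let p ≥ 1 and α, β ∈ ℝ. The sin-cardinal type function G_Γ(z) = ((z²−1)/(πz²)) sin(πz²/2) belongs to L^p(ℂ, dν_{p,α,β}) if and only if β > 1/p, where dν_{p,α,β}(z) = ((1+|z|²)/(1+|Im z²|))^{αp} (1+|z|)^{−pβ} e^{−pπ|z|²/2} dA(z). -/
open MeasureTheory Real Set

namespace Complex

noncomputable def abs : AbsoluteValue ℂ ℝ where
  toFun z := ‖z‖
  map_mul' := norm_mul
  nonneg' := norm_nonneg
  eq_zero' _ := norm_eq_zero
  add_le' := norm_add_le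

lemma norm_eq_abs (z : ℂ) : ‖z‖ = abs z := rfl

@[simp] lemma abs_ofReal (r : ℝ) : abs (r : ℂ) = |r| := Complex.norm_real r

@[simp] lemma abs_I : abs I = 1 := Complex.norm_I

@[simp] lemma abs_ofNat (n : ℕ) [n.AtLeastTwo] : abs (OfNat.ofNat n : ℂ) = OfNat.ofNat n :=
  Complex.norm_ofNat n

@[simp] lemma abs_one : abs (1 : ℂ) = 1 := (norm_one : ‖(1 : ℂ)‖ = 1)

@[simp] lemma abs_two : abs (2 : ℂ) = 2 := (Complex.norm_two : ‖(2 : ℂ)‖ = 2)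

lemma abs_exp (z : ℂ) : abs (exp z) = Real.exp z.re := Complex.norm_exp z

lemma abs_exp_sub_one_le {x : ℂ} (hx : abs x ≤ 1) : abs (exp x - 1) ≤ 2 * abs x :=
  Complex.norm_exp_sub_one_le hx

lemma sq_abs (z : ℂ) : abs z ^ 2 = normSq z := Complex.sq_norm z

lemma abs_re_le_abs (z : ℂ) : |z.re| ≤ abs z := Complex.abs_re_le_norm z

lemma abs_im_le_abs (z : ℂ) : |z.im| ≤ abs z := Complex.abs_im_le_norm z

lemma abs_le_abs_re_add_abs_im (z : ℂ) : abs z ≤ |z.re| + |z.im| :=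
  Complex.norm_le_abs_re_add_abs_im z

end Complex

namespace Stmt12Aux


lemma exp_rpow' (t r : ℝ) : Real.exp t ^ r = Real.exp (t * r) := by
  rw [Real.rpow_def_of_pos (Real.exp_pos t), Real.log_exp]

lemma poly_le_exp {γ a : ℝ} (hγ : 0 ≤ γ) (ha : 0 < a) :
    ∃ K : ℝ, 0 < K ∧ ∀ s : ℝ, 0 ≤ s → (1 + s) ^ γ ≤ K * Real.exp (a * s) := by
  rcases eq_or_lt_of_le hγ with h0 | hγpos
  · refine ⟨1, one_pos, fun s hs => ?_⟩
    rw [← h0, Real.rpow_zero, one_mul]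
    exact Real.one_le_exp (by positivity)
  · set c := min 1 (a / γ) with hc
    have hc0 : 0 < c := lt_min one_pos (div_pos ha hγpos)
    have hc1 : c ≤ 1 := min_le_left _ _
    have hcγ : c * γ ≤ a := by
      have := min_le_right 1 (a / γ)
      calc c * γ ≤ (a / γ) * γ := by
            apply mul_le_mul_of_nonneg_right this hγ
        _ = a := by field_simp
    refine ⟨(1/c) ^ γ, Real.rpow_pos_of_pos (by positivity) _, fun s hs => ?_⟩
    have h1 : 1 + s ≤ (1/c) * Real.exp (c * s) := by
      rw [one_div, ← div_eq_inv_mul, le_div_iff₀ hc0]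
      nlinarith [Real.add_one_le_exp (c * s)]
    calc (1+s)^γ ≤ ((1/c) * Real.exp (c*s))^γ :=
          Real.rpow_le_rpow (by linarith) h1 hγ
      _ = (1/c)^γ * (Real.exp (c*s))^γ := Real.mul_rpow (by positivity) (Real.exp_pos _).le
      _ = (1/c)^γ * Real.exp (c * s * γ) := by rw [exp_rpow']
      _ ≤ (1/c)^γ * Real.exp (a * s) := by
          apply mul_le_mul_of_nonneg_left _ (by positivity)
          apply Real.exp_le_exp.2
          calc c * s * γ = (c * γ) * s := by ring
            _ ≤ a * s := mul_le_mul_of_nonneg_right hcγ hs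

lemma sin_abs_le (w : ℂ) : Complex.abs (Complex.sin w) ≤ Real.exp |w.im| := by
  have hdef : Complex.sin w = ((Complex.exp (-w * Complex.I) - Complex.exp (w * Complex.I)) * Complex.I) / 2 := rfl
  rw [hdef]
  have h1 : (-w * Complex.I).re = w.im := by simp [Complex.mul_re]
  have h2 : (w * Complex.I).re = -w.im := by simp [Complex.mul_re]
  calc Complex.abs (((Complex.exp (-w * Complex.I) - Complex.exp (w * Complex.I)) * Complex.I) / 2)
      = Complex.abs (Complex.exp (-w * Complex.I) - Complex.exp (w * Complex.I)) / 2 := by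
        simp [map_div₀, map_mul]
    _ ≤ (Complex.abs (Complex.exp (-w * Complex.I)) + Complex.abs (Complex.exp (w * Complex.I))) / 2 := by
        have := norm_sub_le (Complex.exp (-w * Complex.I)) (Complex.exp (w * Complex.I))
        simp only [Complex.norm_eq_abs] at this
        linarith
    _ ≤ Real.exp |w.im| := by
        rw [Complex.abs_exp, Complex.abs_exp, h1, h2]
        have := Real.exp_le_exp.2 (le_abs_self w.im)
        have := Real.exp_le_exp.2 (neg_le_abs w.im)
        linarith



lemma sin_small {w : ℂ} (h : Complex.abs w ≤ 1) :
    Complex.abs (Complex.sin w) ≤ 2 * Complex.abs w := by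
  have hdef : Complex.sin w
      = (((Complex.exp (-w * Complex.I) - 1) - (Complex.exp (w * Complex.I) - 1)) * Complex.I) / 2 := by
    have : Complex.sin w = ((Complex.exp (-w * Complex.I) - Complex.exp (w * Complex.I)) * Complex.I) / 2 := rfl
    rw [this]; ring
  have hm : Complex.abs (-w * Complex.I) = Complex.abs w := by simp
  have hp : Complex.abs (w * Complex.I) = Complex.abs w := by simp
  have b1 := Complex.abs_exp_sub_one_le (x := -w * Complex.I) (by rw [hm]; exact h)
  have b2 := Complex.abs_exp_sub_one_le (x := w * Complex.I) (by rw [hp]; exact h)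
  rw [hm] at b1; rw [hp] at b2
  calc Complex.abs (Complex.sin w)
      = Complex.abs ((Complex.exp (-w * Complex.I) - 1) - (Complex.exp (w * Complex.I) - 1)) / 2 := by
        rw [hdef]; simp [map_div₀, map_mul]
    _ ≤ (Complex.abs (Complex.exp (-w * Complex.I) - 1) + Complex.abs (Complex.exp (w * Complex.I) - 1)) / 2 := by
        have := norm_sub_le (Complex.exp (-w * Complex.I) - 1) (Complex.exp (w * Complex.I) - 1)
        simp only [Complex.norm_eq_abs] at this
        linarith
    _ ≤ 2 * Complex.abs w := by linarith

lemma sin_lower {w : ℂ} (h : 1 ≤ w.im) :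
    Real.exp w.im / 4 ≤ Complex.abs (Complex.sin w) := by
  have hdef : Complex.sin w = ((Complex.exp (-w * Complex.I) - Complex.exp (w * Complex.I)) * Complex.I) / 2 := rfl
  have h1 : (-w * Complex.I).re = w.im := by simp [Complex.mul_re]
  have h2 : (w * Complex.I).re = -w.im := by simp [Complex.mul_re]
  have key : Complex.abs (Complex.sin w)
      = Complex.abs (Complex.exp (-w * Complex.I) - Complex.exp (w * Complex.I)) / 2 := by
    rw [hdef]; simp [map_div₀, map_mul]
  have tri : Complex.abs (Complex.exp (-w * Complex.I)) - Complex.abs (Complex.exp (w * Complex.I))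
      ≤ Complex.abs (Complex.exp (-w * Complex.I) - Complex.exp (w * Complex.I)) := by
    have := norm_sub_norm_le (Complex.exp (-w * Complex.I)) (Complex.exp (w * Complex.I))
    simpa [Complex.norm_eq_abs] using this
  rw [Complex.abs_exp, Complex.abs_exp, h1, h2] at tri
  have e1 : Real.exp (-w.im) ≤ 1 := Real.exp_le_one_iff.2 (by linarith)
  have e2 : (2:ℝ) ≤ Real.exp w.im := by
    have := Real.add_one_le_exp (1:ℝ)
    have := Real.exp_le_exp.2 h
    linarith
  rw [key]
  linarith




noncomputable def Gf (z : ℂ) : ℝ :=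
  Complex.abs ((z ^ 2 - 1) / ((Real.pi : ℂ) * z ^ 2) * Complex.sin ((Real.pi : ℂ) * z ^ 2 / 2))

lemma w_im (z : ℂ) : ((Real.pi : ℂ) * z ^ 2 / 2).im = Real.pi * (z ^ 2).im / 2 := by
  have h : ((Real.pi : ℂ) * z ^ 2 / 2) = ((Real.pi / 2 : ℝ) : ℂ) * z ^ 2 := by
    push_cast; ring
  rw [h, Complex.im_ofReal_mul]; ring

lemma w_abs (z : ℂ) : Complex.abs ((Real.pi : ℂ) * z ^ 2 / 2) = Real.pi * (Complex.abs z) ^ 2 / 2 := by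
  rw [map_div₀, map_mul, map_pow]
  simp [Complex.abs_ofReal, abs_of_nonneg Real.pi_nonneg]

lemma Gf_split (z : ℂ) :
    Gf z = Complex.abs (z ^ 2 - 1) / (Real.pi * (Complex.abs z) ^ 2)
      * Complex.abs (Complex.sin ((Real.pi : ℂ) * z ^ 2 / 2)) := by
  rw [Gf, map_mul, map_div₀, map_mul, map_pow]
  simp [Complex.abs_ofReal, abs_of_nonneg Real.pi_nonneg]

lemma Gf_upper (z : ℂ) : Gf z ≤ 5 * Real.exp (Real.pi * |(z ^ 2).im| / 2) := by
  have hpi := Real.pi_gt_three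
  have hexp1 : (1:ℝ) ≤ Real.exp (Real.pi * |(z ^ 2).im| / 2) :=
    Real.one_le_exp (by positivity)
  rcases eq_or_ne z 0 with rfl | hz
  · rw [Gf]; norm_num
  have ha : 0 < Complex.abs z := by
    simpa [Complex.abs.pos_iff] using hz
  have hnum : Complex.abs (z ^ 2 - 1) ≤ (Complex.abs z) ^ 2 + 1 := by
    calc Complex.abs (z ^ 2 - 1) ≤ Complex.abs (z ^ 2) + Complex.abs 1 := by
          have := norm_sub_le (z ^ 2) (1 : ℂ)
          simpa [Complex.norm_eq_abs] using this
      _ = (Complex.abs z) ^ 2 + 1 := by rw [map_pow]; simp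
  rcases le_total (Complex.abs ((Real.pi : ℂ) * z ^ 2 / 2)) 1 with hw | hw
  · -- small case
    have hs := sin_small hw
    rw [w_abs] at hw hs
    have ha2 : (Complex.abs z) ^ 2 ≤ 2 / Real.pi := by
      rw [div_le_one (by positivity)] at hw
      rw [le_div_iff₀ (by positivity)]; linarith
    rw [Gf_split]
    calc Complex.abs (z ^ 2 - 1) / (Real.pi * (Complex.abs z) ^ 2)
          * Complex.abs (Complex.sin ((Real.pi : ℂ) * z ^ 2 / 2))
        ≤ Complex.abs (z ^ 2 - 1) / (Real.pi * (Complex.abs z) ^ 2)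
          * (2 * (Real.pi * (Complex.abs z) ^ 2 / 2)) := by
          apply mul_le_mul_of_nonneg_left hs (by positivity)
      _ = Complex.abs (z ^ 2 - 1) := by field_simp
      _ ≤ (Complex.abs z) ^ 2 + 1 := hnum
      _ ≤ 2 / Real.pi + 1 := by linarith
      _ ≤ 5 * Real.exp (Real.pi * |(z ^ 2).im| / 2) := by
          have h2pi : 2 / Real.pi ≤ 1 := by
            rw [div_le_one (by positivity)]; linarith
          nlinarith
  · -- big case
    have hs := sin_abs_le ((Real.pi : ℂ) * z ^ 2 / 2)
    rw [w_im] at hs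
    have habs_im : |Real.pi * (z ^ 2).im / 2| = Real.pi * |(z ^ 2).im| / 2 := by
      rw [abs_div, abs_mul, abs_of_nonneg Real.pi_nonneg]; norm_num
    rw [habs_im] at hs
    rw [w_abs] at hw
    have ha2 : 2 / Real.pi ≤ (Complex.abs z) ^ 2 := by
      rw [div_le_iff₀ (by positivity)]; nlinarith
    have hpre : Complex.abs (z ^ 2 - 1) / (Real.pi * (Complex.abs z) ^ 2) ≤ 1 := by
      rw [div_le_one (by positivity)]
      have h2 : (2:ℝ) ≤ Real.pi * (Complex.abs z) ^ 2 := by linarith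
      have h3 : 3 * (Complex.abs z) ^ 2 ≤ Real.pi * (Complex.abs z) ^ 2 := by nlinarith
      have h4 : (0:ℝ) ≤ Real.pi * (Complex.abs z) ^ 2 := by positivity
      linarith
    rw [Gf_split]
    calc Complex.abs (z ^ 2 - 1) / (Real.pi * (Complex.abs z) ^ 2)
          * Complex.abs (Complex.sin ((Real.pi : ℂ) * z ^ 2 / 2))
        ≤ 1 * Real.exp (Real.pi * |(z ^ 2).im| / 2) := by
          apply mul_le_mul hpre hs (by positivity) (by norm_num)
      _ ≤ 5 * Real.exp (Real.pi * |(z ^ 2).im| / 2) := by nlinarith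



lemma sq_im (z : ℂ) : (z ^ 2).im = 2 * z.re * z.im := by
  rw [pow_two, Complex.mul_im]; ring

lemma sq_abs' (z : ℂ) : (Complex.abs z) ^ 2 = z.re ^ 2 + z.im ^ 2 := by
  rw [Complex.sq_abs, Complex.normSq_apply]; ring

lemma Gf_lower {z : ℂ} (hx : 2 ≤ z.re) (hy1 : z.re ≤ z.im) (hy2 : z.im ≤ z.re + 1) :
    Real.exp (Real.pi * (z ^ 2).im / 2) / 32 ≤ Gf z := by
  have hpi3 := Real.pi_gt_three
  have hpi4 := Real.pi_lt_d2
  set x := z.re with hxd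
  set y := z.im with hyd
  have hxy : 4 ≤ x * y := by nlinarith
  have him : (z ^ 2).im = 2 * x * y := sq_im z
  have hs : (Complex.abs z) ^ 2 = x ^ 2 + y ^ 2 := sq_abs' z
  have hs8 : 8 ≤ (Complex.abs z) ^ 2 := by nlinarith
  have hwim : 1 ≤ ((Real.pi : ℂ) * z ^ 2 / 2).im := by
    rw [w_im, him]; nlinarith
  have hsin := sin_lower hwim
  rw [w_im] at hsin
  have hnum : (Complex.abs z) ^ 2 - 1 ≤ Complex.abs (z ^ 2 - 1) := by
    have h := norm_sub_norm_le (z ^ 2) (1 : ℂ)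
    have h2 : Complex.abs (z ^ 2) = (Complex.abs z) ^ 2 := by rw [map_pow]
    simpa [Complex.norm_eq_abs, h2] using h
  have hpre : (1:ℝ) / 8 ≤ Complex.abs (z ^ 2 - 1) / (Real.pi * (Complex.abs z) ^ 2) := by
    rw [div_le_div_iff₀ (by norm_num) (by positivity)]
    -- 1 * (π * a²) ≤ abs(z²-1) * 8
    have : Real.pi * (Complex.abs z) ^ 2 ≤ 4 * (Complex.abs z) ^ 2 := by nlinarith
    nlinarith
  rw [Gf_split]
  calc Real.exp (Real.pi * (z ^ 2).im / 2) / 32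
      = (1/8) * (Real.exp (Real.pi * (z ^ 2).im / 2) / 4) := by ring
    _ ≤ Complex.abs (z ^ 2 - 1) / (Real.pi * (Complex.abs z) ^ 2)
        * Complex.abs (Complex.sin ((Real.pi : ℂ) * z ^ 2 / 2)) := by
        apply mul_le_mul hpre hsin (by positivity) (by positivity)



noncomputable def hone (q : ℝ) : ℝ → ℝ := fun t => (1 + |t|) ^ (-q)

lemma hone_int {q : ℝ} (hq : 1 < q) : Integrable (hone q) := by
  have := integrable_one_add_norm (E := ℝ) (μ := volume) (r := q)
    (by simpa using hq)
  exact (by simpa [Real.norm_eq_abs] using this : Integrable (fun t : ℝ => (1 + |t|) ^ (-q)))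

lemma hone_nonneg (q : ℝ) (t : ℝ) : 0 ≤ hone q t := by
  apply Real.rpow_nonneg; positivity

lemma hone_cont (q : ℝ) : Continuous (hone q) := by
  apply Continuous.rpow_const (by continuity)
  intro t; left; positivity

noncomputable def Hfun (c q : ℝ) : ℝ × ℝ → ℝ :=
  fun w => Real.exp (-c * w.1 ^ 2) * (1 + |2 * w.2 + w.1|) ^ (-q)

lemma Hfun_cont (c q : ℝ) : Continuous (Hfun c q) := by
  apply Continuous.mul
  · exact (Real.continuous_exp.comp (by continuity))
  · apply Continuous.rpow_const (by continuity)
    intro w; left; positivity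

lemma Hfun_integrable {c q : ℝ} (hc : 0 < c) (hq : 1 < q) :
    Integrable (Hfun c q) (volume : Measure (ℝ × ℝ)) := by
  rw [Measure.volume_eq_prod]
  rw [integrable_prod_iff ((Hfun_cont c q).aestronglyMeasurable)]
  constructor
  · refine Filter.Eventually.of_forall (fun x => ?_)
    have h1 : Integrable (fun t : ℝ => hone q (t + x)) := (hone_int hq).comp_add_right x
    have h2 : Integrable (fun v : ℝ => hone q (2 * v + x)) := by
      have := h1.comp_mul_left' (R := 2) two_ne_zero
      simpa using this
    exact (h2.const_mul (Real.exp (-c * x ^ 2))).congr (Filter.Eventually.of_forall (fun v => by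
      simp [Hfun, hone]))
  · -- fun x => ∫ y, ‖Hfun (x, y)‖
    have hval : ∀ x : ℝ, (∫ y : ℝ, ‖Hfun c q (x, y)‖)
        = Real.exp (-c * x ^ 2) * (|(2:ℝ)⁻¹| • ∫ t : ℝ, hone q t) := by
      intro x
      have hnn : ∀ y : ℝ, ‖Hfun c q (x, y)‖ = Real.exp (-c * x ^ 2) * hone q (2 * y + x) := by
        intro y
        rw [Real.norm_eq_abs, abs_of_nonneg (by
          apply mul_nonneg (Real.exp_pos _).le
          apply Real.rpow_nonneg; positivity)]
        simp [Hfun, hone]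
      simp_rw [hnn]
      rw [integral_const_mul]
      congr 1
      have e1 : (∫ y : ℝ, hone q (2 * y + x)) = |(2:ℝ)⁻¹| • ∫ t : ℝ, hone q (t + x) := by
        exact Measure.integral_comp_mul_left (fun t => hone q (t + x)) 2
      rw [e1, integral_add_right_eq_self]
    have : Integrable (fun x : ℝ => Real.exp (-c * x ^ 2) * (|(2:ℝ)⁻¹| • ∫ t : ℝ, hone q t)) :=
      (integrable_exp_neg_mul_sq hc).mul_const _
    exact this.congr (Filter.Eventually.of_forall (fun x => (hval x).symm))





lemma H1_integrable {c q : ℝ} (hc : 0 < c) (hq : 1 < q) :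
    Integrable (fun z : ℂ =>
      Real.exp (-c * (z.re - z.im) ^ 2) * (1 + |z.re + z.im|) ^ (-q)) (volume : Measure ℂ) := by
  have hΦ : MeasurePreserving (fun p : ℝ × ℝ => (p.2 - p.1, p.1))
      (volume.prod volume) (volume.prod volume) := by
    have h1 := measurePreserving_sub_prod (volume : Measure ℝ) (volume : Measure ℝ)
    have h2 := Measure.measurePreserving_swap (μ := (volume : Measure ℝ)) (ν := (volume : Measure ℝ))
    exact h1.comp h2
  have hI : Integrable ((Hfun c q) ∘ (fun p : ℝ × ℝ => (p.2 - p.1, p.1))) (volume.prod volume) :=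
    (hΦ.integrable_comp (Hfun_cont c q).aestronglyMeasurable).mpr (by
      rw [← Measure.volume_eq_prod]; exact Hfun_integrable hc hq)
  have hI2 : Integrable (fun p : ℝ × ℝ =>
      Real.exp (-c * (p.1 - p.2) ^ 2) * (1 + |p.1 + p.2|) ^ (-q)) (volume : Measure (ℝ × ℝ)) := by
    rw [Measure.volume_eq_prod]
    apply hI.congr
    refine Filter.Eventually.of_forall (fun p => ?_)
    show Real.exp (-c * (p.2 - p.1) ^ 2) * (1 + |2 * p.1 + (p.2 - p.1)|) ^ (-q) = _
    rw [show 2 * p.1 + (p.2 - p.1) = p.1 + p.2 from by ring,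
      show (p.2 - p.1) ^ 2 = (p.1 - p.2) ^ 2 from by ring]
  have hV := Complex.volume_preserving_equiv_real_prod
  have := (hV.integrable_comp hI2.aestronglyMeasurable).mpr hI2
  exact this.congr (Filter.Eventually.of_forall (fun z => rfl))

lemma H2_integrable {c q : ℝ} (hc : 0 < c) (hq : 1 < q) :
    Integrable (fun z : ℂ =>
      Real.exp (-c * (z.re + z.im) ^ 2) * (1 + |z.re - z.im|) ^ (-q)) (volume : Measure ℂ) := by
  have hΦ : MeasurePreserving (fun p : ℝ × ℝ => (p.2 - p.1, p.1))
      (volume.prod volume) (volume.prod volume) := by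
    have h1 := measurePreserving_sub_prod (volume : Measure ℝ) (volume : Measure ℝ)
    have h2 := Measure.measurePreserving_swap (μ := (volume : Measure ℝ)) (ν := (volume : Measure ℝ))
    exact h1.comp h2
  have hN : MeasurePreserving (fun p : ℝ × ℝ => (p.1, -p.2))
      (volume.prod volume) (volume.prod volume) := by
    have := (MeasurePreserving.id (volume : Measure ℝ)).prod
      (Measure.measurePreserving_neg (volume : Measure ℝ))
    exact this
  have hΨ := hΦ.comp hN
  have hI : Integrable ((Hfun c q) ∘ ((fun p : ℝ × ℝ => (p.2 - p.1, p.1)) ∘ (fun p : ℝ × ℝ => (p.1, -p.2))))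
      (volume.prod volume) :=
    ((hΨ).integrable_comp (Hfun_cont c q).aestronglyMeasurable).mpr (by
      rw [← Measure.volume_eq_prod]; exact Hfun_integrable hc hq)
  have hI2 : Integrable (fun p : ℝ × ℝ =>
      Real.exp (-c * (p.1 + p.2) ^ 2) * (1 + |p.1 - p.2|) ^ (-q)) (volume : Measure (ℝ × ℝ)) := by
    rw [Measure.volume_eq_prod]
    apply hI.congr
    refine Filter.Eventually.of_forall (fun p => ?_)
    show Real.exp (-c * (-p.2 - p.1) ^ 2) * (1 + |2 * p.1 + (-p.2 - p.1)|) ^ (-q) = _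
    rw [show 2 * p.1 + (-p.2 - p.1) = p.1 - p.2 from by ring,
      show (-p.2 - p.1) ^ 2 = (p.1 + p.2) ^ 2 from by ring]
  have hV := Complex.volume_preserving_equiv_real_prod
  have := (hV.integrable_comp hI2.aestronglyMeasurable).mpr hI2
  exact this.congr (Filter.Eventually.of_forall (fun z => rfl))





lemma half_rpow {t : ℝ} (ht : 0 ≤ t) (q : ℝ) : ((1 + t) / 2) ^ (-q) = 2 ^ q * (1 + t) ^ (-q) := by
  rw [Real.div_rpow (by linarith) (by norm_num), Real.rpow_neg (by norm_num : (0:ℝ) ≤ 2)]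
  rw [div_eq_mul_inv, inv_inv, mul_comm]

/-- The main pointwise bound, case version. -/
lemma pointwise_bound (p α β K₁ : ℝ) (hp : 1 ≤ p) (hβ : 0 ≤ p * β) (hK₁0 : 0 ≤ K₁)
    (hK₁ : ∀ s : ℝ, 0 ≤ s → (1 + s) ^ (|α| * p) ≤ K₁ * Real.exp ((p * Real.pi / 4) * s)) (z : ℂ) :
    Gf z ^ p *
      (((1 + (Complex.abs z) ^ 2) / (1 + |(z ^ 2).im|)) ^ (α * p) *
        ((1 + Complex.abs z) ^ (-(p * β)) *
          Real.exp (-(p * Real.pi / 2) * (Complex.abs z) ^ 2)))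
    ≤ (5 ^ p * K₁ * 2 ^ (p * β)) *
      (Real.exp (-(p * Real.pi / 4) * (z.re - z.im) ^ 2) * (1 + |z.re + z.im|) ^ (-(p * β)) +
       Real.exp (-(p * Real.pi / 4) * (z.re + z.im) ^ 2) * (1 + |z.re - z.im|) ^ (-(p * β))) := by
  have hp0 : (0:ℝ) < p := lt_of_lt_of_le one_pos hp
  set x := z.re
  set y := z.im
  have hs : (Complex.abs z) ^ 2 = x ^ 2 + y ^ 2 := sq_abs' z
  have him : (z ^ 2).im = 2 * x * y := sq_im z
  set a := Complex.abs z with ha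
  set m := |(z ^ 2).im| with hmdef
  have hm0 : 0 ≤ m := abs_nonneg _
  have hms : m ≤ a ^ 2 := by
    rw [hmdef, him, hs]
    rw [abs_le]
    constructor
    · nlinarith [sq_nonneg (x + y)]
    · nlinarith [sq_nonneg (x - y)]
  -- step 1
  have h1 : Gf z ^ p ≤ 5 ^ p * Real.exp (p * Real.pi * m / 2) := by
    calc Gf z ^ p ≤ (5 * Real.exp (Real.pi * m / 2)) ^ p := by
          apply Real.rpow_le_rpow (Complex.abs.nonneg _) (Gf_upper z) hp0.le
      _ = 5 ^ p * Real.exp (Real.pi * m / 2) ^ p := Real.mul_rpow (by norm_num) (Real.exp_pos _).le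
      _ = 5 ^ p * Real.exp (p * Real.pi * m / 2) := by rw [exp_rpow']; ring_nf
  -- step 2
  have hB1 : (1:ℝ) ≤ (1 + a ^ 2) / (1 + m) := by
    rw [le_div_iff₀ (by positivity)]; linarith
  have hBle : (1 + a ^ 2) / (1 + m) ≤ 1 + (a ^ 2 - m) := by
    rw [div_le_iff₀ (by positivity)]; nlinarith
  have h2 : ((1 + a ^ 2) / (1 + m)) ^ (α * p)
      ≤ K₁ * Real.exp ((p * Real.pi / 4) * (a ^ 2 - m)) := by
    calc ((1 + a ^ 2) / (1 + m)) ^ (α * p) ≤ ((1 + a ^ 2) / (1 + m)) ^ (|α| * p) := by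
          apply Real.rpow_le_rpow_of_exponent_le hB1
          exact mul_le_mul_of_nonneg_right (le_abs_self α) hp0.le
      _ ≤ (1 + (a ^ 2 - m)) ^ (|α| * p) := by
          apply Real.rpow_le_rpow (by positivity) hBle (by positivity)
      _ ≤ K₁ * Real.exp ((p * Real.pi / 4) * (a ^ 2 - m)) := hK₁ _ (by linarith)
  -- step 3, case split
  have hxabs : |x| ≤ a := Complex.abs_re_le_abs z
  have hyabs : |y| ≤ a := Complex.abs_im_le_abs z
  have key : ∀ T : ℝ, 0 ≤ T → |T| ≤ 2 * a →
      (1 + a) ^ (-(p * β)) ≤ 2 ^ (p * β) * (1 + |T|) ^ (-(p * β)) → True := fun _ _ _ _ => trivial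
  have h3gen : ∀ T : ℝ, |T| ≤ 2 * a →
      (1 + a) ^ (-(p * β)) ≤ 2 ^ (p * β) * (1 + |T|) ^ (-(p * β)) := by
    intro T hT
    have habs0 : (0:ℝ) ≤ |T| := abs_nonneg T
    have h4 : (1 + |T|) / 2 ≤ 1 + a := by
      have h5 : (0:ℝ) ≤ a := Complex.abs.nonneg z
      linarith
    have := Real.rpow_le_rpow_of_nonpos (by positivity) h4 (by linarith : -(p*β) ≤ 0)
    rw [half_rpow habs0] at this
    exact this
  have ha0 : (0:ℝ) ≤ a := Complex.abs.nonneg z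
  rcases le_or_gt 0 (x * y) with hxy | hxy
  · -- diagonal case : m = 2 x y, use first term
    have hmval : m = 2 * x * y := by
      rw [hmdef, him]; exact abs_of_nonneg (by nlinarith)
    have hT : |x + y| ≤ 2 * a := by
      calc |x + y| ≤ |x| + |y| := abs_add_le x y
        _ ≤ 2 * a := by linarith
    have h3 := h3gen (x + y) hT
    calc Gf z ^ p *
        (((1 + a ^ 2) / (1 + m)) ^ (α * p) *
          ((1 + a) ^ (-(p * β)) * Real.exp (-(p * Real.pi / 2) * a ^ 2)))
        ≤ (5 ^ p * Real.exp (p * Real.pi * m / 2)) *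
          ((K₁ * Real.exp ((p * Real.pi / 4) * (a ^ 2 - m))) *
            ((2 ^ (p * β) * (1 + |x + y|) ^ (-(p * β))) * Real.exp (-(p * Real.pi / 2) * a ^ 2))) := by
          apply mul_le_mul h1 ?_ (by positivity) (by positivity)
          apply mul_le_mul h2 ?_ (by positivity) (by positivity)
          apply mul_le_mul h3 le_rfl (Real.exp_pos _).le (by positivity)
      _ = (5 ^ p * K₁ * 2 ^ (p * β)) * ((1 + |x + y|) ^ (-(p * β)) *
            (Real.exp (p * Real.pi * m / 2) * Real.exp ((p * Real.pi / 4) * (a ^ 2 - m)) *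
              Real.exp (-(p * Real.pi / 2) * a ^ 2))) := by ring
      _ = (5 ^ p * K₁ * 2 ^ (p * β)) * ((1 + |x + y|) ^ (-(p * β)) *
            Real.exp (-(p * Real.pi / 4) * (x - y) ^ 2)) := by
          rw [← Real.exp_add, ← Real.exp_add]
          congr 2
          rw [hmval, hs]; ring
      _ ≤ (5 ^ p * K₁ * 2 ^ (p * β)) *
          (Real.exp (-(p * Real.pi / 4) * (x - y) ^ 2) * (1 + |x + y|) ^ (-(p * β)) +
           Real.exp (-(p * Real.pi / 4) * (x + y) ^ 2) * (1 + |x - y|) ^ (-(p * β))) := by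
          apply mul_le_mul_of_nonneg_left _ (by positivity)
          rw [mul_comm]
          exact le_add_of_nonneg_right (by positivity)
  · -- anti-diagonal case : m = -(2 x y), use second term
    have hmval : m = -(2 * x * y) := by
      rw [hmdef, him]; exact abs_of_neg (by nlinarith)
    have hT : |x - y| ≤ 2 * a := by
      calc |x - y| ≤ |x| + |y| := abs_sub x y
        _ ≤ 2 * a := by linarith
    have h3 := h3gen (x - y) hT
    calc Gf z ^ p *
        (((1 + a ^ 2) / (1 + m)) ^ (α * p) *
          ((1 + a) ^ (-(p * β)) * Real.exp (-(p * Real.pi / 2) * a ^ 2)))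
        ≤ (5 ^ p * Real.exp (p * Real.pi * m / 2)) *
          ((K₁ * Real.exp ((p * Real.pi / 4) * (a ^ 2 - m))) *
            ((2 ^ (p * β) * (1 + |x - y|) ^ (-(p * β))) * Real.exp (-(p * Real.pi / 2) * a ^ 2))) := by
          apply mul_le_mul h1 ?_ (by positivity) (by positivity)
          apply mul_le_mul h2 ?_ (by positivity) (by positivity)
          apply mul_le_mul h3 le_rfl (Real.exp_pos _).le (by positivity)
      _ = (5 ^ p * K₁ * 2 ^ (p * β)) * ((1 + |x - y|) ^ (-(p * β)) *
            (Real.exp (p * Real.pi * m / 2) * Real.exp ((p * Real.pi / 4) * (a ^ 2 - m)) *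
              Real.exp (-(p * Real.pi / 2) * a ^ 2))) := by ring
      _ = (5 ^ p * K₁ * 2 ^ (p * β)) * ((1 + |x - y|) ^ (-(p * β)) *
            Real.exp (-(p * Real.pi / 4) * (x + y) ^ 2)) := by
          rw [← Real.exp_add, ← Real.exp_add]
          congr 2
          rw [hmval, hs]; ring
      _ ≤ (5 ^ p * K₁ * 2 ^ (p * β)) *
          (Real.exp (-(p * Real.pi / 4) * (x - y) ^ 2) * (1 + |x + y|) ^ (-(p * β)) +
           Real.exp (-(p * Real.pi / 4) * (x + y) ^ 2) * (1 + |x - y|) ^ (-(p * β))) := by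
          apply mul_le_mul_of_nonneg_left _ (by positivity)
          rw [mul_comm]
          exact le_add_of_nonneg_left (by positivity)





lemma F1_lower (p α : ℝ) (hp : 1 ≤ p) {z : ℂ}
    (hx : 2 ≤ z.re) (hy1 : z.re ≤ z.im) (hy2 : z.im ≤ z.re + 1) :
    ((32:ℝ) ^ (-p) * min 1 (2 ^ (α * p)) * Real.exp (-(p * Real.pi / 2)) / 4) * (z.re)⁻¹
      ≤ Gf z ^ p *
        (((1 + (Complex.abs z) ^ 2) / (1 + |(z ^ 2).im|)) ^ (α * p) *
          ((1 + Complex.abs z) ^ (-(1:ℝ)) *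
            Real.exp (-(p * Real.pi / 2) * (Complex.abs z) ^ 2))) := by
  have hp0 : (0:ℝ) < p := lt_of_lt_of_le one_pos hp
  have hpi3 := Real.pi_gt_three
  set x := z.re with hxd
  set y := z.im with hyd
  have hs : (Complex.abs z) ^ 2 = x ^ 2 + y ^ 2 := sq_abs' z
  have him : (z ^ 2).im = 2 * x * y := sq_im z
  set a := Complex.abs z with had
  have ha0 : (0:ℝ) ≤ a := Complex.abs.nonneg z
  have hxy : 4 ≤ x * y := by nlinarith
  have hmval : |(z ^ 2).im| = 2 * x * y := by
    rw [him]; exact abs_of_nonneg (by nlinarith)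
  -- Gf ^ p lower bound
  have hG := Gf_lower hx hy1 hy2
  have h1 : (32:ℝ) ^ (-p) * Real.exp (p * Real.pi * (z ^ 2).im / 2) ≤ Gf z ^ p := by
    have h0 : (0:ℝ) ≤ Real.exp (Real.pi * (z ^ 2).im / 2) / 32 := by positivity
    calc (32:ℝ) ^ (-p) * Real.exp (p * Real.pi * (z ^ 2).im / 2)
        = (Real.exp (Real.pi * (z ^ 2).im / 2) / 32) ^ p := by
          rw [Real.div_rpow (Real.exp_pos _).le (by norm_num), exp_rpow',
            Real.rpow_neg (by norm_num : (0:ℝ) ≤ 32)]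
          rw [div_eq_mul_inv, mul_comm]
          congr 2
          ring
      _ ≤ Gf z ^ p := Real.rpow_le_rpow h0 hG hp0.le
  -- B bounds
  have hm0 : (0:ℝ) ≤ |(z ^ 2).im| := abs_nonneg _
  have hms : |(z ^ 2).im| ≤ a ^ 2 := by
    rw [hmval, hs]; nlinarith [sq_nonneg (x - y)]
  have hB1 : (1:ℝ) ≤ (1 + a ^ 2) / (1 + |(z ^ 2).im|) := by
    rw [le_div_iff₀ (by positivity)]; linarith
  have hB2 : (1 + a ^ 2) / (1 + |(z ^ 2).im|) ≤ 2 := by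
    rw [div_le_iff₀ (by positivity)]
    rw [hmval, hs]
    nlinarith [sq_nonneg (x - y), hy1, hy2]
  have h2 : min 1 ((2:ℝ) ^ (α * p)) ≤ ((1 + a ^ 2) / (1 + |(z ^ 2).im|)) ^ (α * p) := by
    rcases le_or_gt 0 (α * p) with hap | hap
    · refine le_trans (min_le_left _ _) ?_
      calc (1:ℝ) = 1 ^ (α * p) := (Real.one_rpow _).symm
        _ ≤ ((1 + a ^ 2) / (1 + |(z ^ 2).im|)) ^ (α * p) :=
            Real.rpow_le_rpow (by norm_num) hB1 hap
    · refine le_trans (min_le_right _ _) ?_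
      exact Real.rpow_le_rpow_of_nonpos (by positivity) hB2 hap.le
  -- inverse bound
  have haxy : a ≤ x + y := by
    have := Complex.abs_le_abs_re_add_abs_im z
    rw [abs_of_nonneg (by linarith : (0:ℝ) ≤ x), abs_of_nonneg (by linarith : (0:ℝ) ≤ y)] at this
    exact this
  have h3 : (4 * x)⁻¹ ≤ (1 + a) ^ (-(1:ℝ)) := by
    rw [Real.rpow_neg_one]
    apply inv_anti₀ (by positivity)
    linarith
  -- final combination
  have h4 : Real.exp (-(p * Real.pi / 2)) ≤
      Real.exp (p * Real.pi * (z ^ 2).im / 2) * Real.exp (-(p * Real.pi / 2) * a ^ 2) := by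
    rw [← Real.exp_add]
    apply Real.exp_le_exp.2
    rw [him, hs]
    have hsq : (x - y) ^ 2 ≤ 1 := by nlinarith
    nlinarith [mul_nonneg (mul_nonneg hp0.le Real.pi_pos.le) (sub_nonneg.2 hsq)]
  calc ((32:ℝ) ^ (-p) * min 1 (2 ^ (α * p)) * Real.exp (-(p * Real.pi / 2)) / 4) * x⁻¹
      = ((32:ℝ) ^ (-p) * Real.exp (-(p * Real.pi / 2))) * (min 1 ((2:ℝ) ^ (α * p)) * (4 * x)⁻¹) := by
        rw [mul_inv]
        ring
    _ ≤ ((32:ℝ) ^ (-p) * (Real.exp (p * Real.pi * (z ^ 2).im / 2) * Real.exp (-(p * Real.pi / 2) * a ^ 2)))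
        * (((1 + a ^ 2) / (1 + |(z ^ 2).im|)) ^ (α * p) * ((1 + a) ^ (-(1:ℝ)))) := by
        apply mul_le_mul
        · exact mul_le_mul_of_nonneg_left h4 (by positivity)
        · apply mul_le_mul h2 h3 (by positivity) (by positivity)
        · exact mul_nonneg (le_min (by norm_num) (by positivity)) (by positivity)
        · positivity
    _ = ((32:ℝ) ^ (-p) * Real.exp (p * Real.pi * (z ^ 2).im / 2)) *
        (((1 + a ^ 2) / (1 + |(z ^ 2).im|)) ^ (α * p) *
          ((1 + a) ^ (-(1:ℝ)) * Real.exp (-(p * Real.pi / 2) * a ^ 2))) := by ring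
    _ ≤ Gf z ^ p *
        (((1 + a ^ 2) / (1 + |(z ^ 2).im|)) ^ (α * p) *
          ((1 + a) ^ (-(1:ℝ)) * Real.exp (-(p * Real.pi / 2) * a ^ 2))) := by
        apply mul_le_mul_of_nonneg_right h1 (by positivity)





lemma not_integrable (p α β : ℝ) (hp : 1 ≤ p) (hβ : β ≤ 1 / p)
    (h : MeasureTheory.Integrable (fun z : ℂ =>
      Complex.abs ((z ^ 2 - 1) / ((Real.pi : ℂ) * z ^ 2) * Complex.sin ((Real.pi : ℂ) * z ^ 2 / 2)) ^ p *
        (((1 + (Complex.abs z) ^ 2) / (1 + |(z ^ 2).im|)) ^ (α * p) *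
          ((1 + Complex.abs z) ^ (-(p * β)) *
            Real.exp (-(p * Real.pi / 2) * (Complex.abs z) ^ 2))))) : False := by
  have hp0 : (0:ℝ) < p := lt_of_lt_of_le one_pos hp
  set F₁ : ℂ → ℝ := fun z => Gf z ^ p *
    (((1 + (Complex.abs z) ^ 2) / (1 + |(z ^ 2).im|)) ^ (α * p) *
      ((1 + Complex.abs z) ^ (-(1:ℝ)) *
        Real.exp (-(p * Real.pi / 2) * (Complex.abs z) ^ 2))) with hF₁def
  have hF₁nonneg : ∀ z, 0 ≤ F₁ z := by
    intro z
    apply mul_nonneg (Real.rpow_nonneg (Complex.abs.nonneg _) _)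
    positivity
  have hmono : ∀ z, F₁ z ≤ Complex.abs ((z ^ 2 - 1) / ((Real.pi : ℂ) * z ^ 2)
      * Complex.sin ((Real.pi : ℂ) * z ^ 2 / 2)) ^ p *
        (((1 + (Complex.abs z) ^ 2) / (1 + |(z ^ 2).im|)) ^ (α * p) *
          ((1 + Complex.abs z) ^ (-(p * β)) *
            Real.exp (-(p * Real.pi / 2) * (Complex.abs z) ^ 2))) := by
    intro z
    have hkey : (1 + Complex.abs z) ^ (-(1:ℝ)) ≤ (1 + Complex.abs z) ^ (-(p * β)) := by
      apply Real.rpow_le_rpow_of_exponent_le (by linarith [Complex.abs.nonneg z])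
      have : p * β ≤ p * (1 / p) := mul_le_mul_of_nonneg_left hβ hp0.le
      rw [mul_one_div, div_self hp0.ne'] at this
      linarith
    apply mul_le_mul_of_nonneg_left _ (Real.rpow_nonneg (Complex.abs.nonneg _) _)
    apply mul_le_mul_of_nonneg_left _ (Real.rpow_nonneg (by positivity) _)
    exact mul_le_mul_of_nonneg_right hkey (Real.exp_pos _).le
  have hmeasF₁ : Measurable F₁ := by
    rw [hF₁def]
    unfold Gf
    simp only [← Complex.norm_eq_abs]
    fun_prop
  have hIntF₁ : Integrable F₁ := by
    apply h.mono' hmeasF₁.aestronglyMeasurable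
    refine Filter.Eventually.of_forall (fun z => ?_)
    rw [Real.norm_eq_abs, abs_of_nonneg (hF₁nonneg z)]
    exact hmono z
  -- transfer to ℝ × ℝ
  have hMP := Complex.volume_preserving_equiv_real_prod.symm Complex.measurableEquivRealProd
  have hIntG : Integrable (F₁ ∘ Complex.measurableEquivRealProd.symm) volume :=
    (hMP.integrable_comp hmeasF₁.aestronglyMeasurable).mpr hIntF₁
  set f : ℝ × ℝ → ENNReal := fun w => ENNReal.ofReal (F₁ (Complex.measurableEquivRealProd.symm w))
    with hfdef
  have hfin : ∫⁻ w, f w < ⊤ := by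
    have h2 := hIntG.2
    rw [Function.comp_def] at h2
    rw [hasFiniteIntegral_iff_ofReal (Filter.Eventually.of_forall (fun w => hF₁nonneg _))] at h2
    exact h2
  have hfm : Measurable f :=
    (hmeasF₁.comp Complex.measurableEquivRealProd.symm.measurable).ennreal_ofReal
  set c₀ : ℝ := (32:ℝ) ^ (-p) * min 1 (2 ^ (α * p)) * Real.exp (-(p * Real.pi / 2)) / 4 with hc₀def
  have hc₀ : 0 < c₀ := by
    apply div_pos (mul_pos (mul_pos (Real.rpow_pos_of_pos (by norm_num) _)
      (lt_min one_pos (Real.rpow_pos_of_pos (by norm_num) _))) (Real.exp_pos _)) (by norm_num)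
  -- inner integral lower bound
  have hinner : ∀ x : ℝ, 2 ≤ x → ENNReal.ofReal (c₀ * x⁻¹) ≤ ∫⁻ y, f (x, y) := by
    intro x hx
    have step : ∀ y ∈ Icc x (x + 1), ENNReal.ofReal (c₀ * x⁻¹) ≤ f (x, y) := by
      intro y hy
      apply ENNReal.ofReal_le_ofReal
      have hre : (Complex.measurableEquivRealProd.symm (x, y)).re = x := by
        rw [Complex.measurableEquivRealProd_symm_apply]
      have him : (Complex.measurableEquivRealProd.symm (x, y)).im = y := by
        rw [Complex.measurableEquivRealProd_symm_apply]
      have := F1_lower p α hp (z := Complex.measurableEquivRealProd.symm (x, y))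
        (by rw [hre]; exact hx) (by rw [hre, him]; exact hy.1) (by rw [hre, him]; linarith [hy.2])
      rw [hre] at this
      exact this
    calc ENNReal.ofReal (c₀ * x⁻¹)
        = ENNReal.ofReal (c₀ * x⁻¹) * volume (Icc x (x + 1)) := by
          rw [Real.volume_Icc]
          norm_num
      _ = ∫⁻ _ in Icc x (x + 1), ENNReal.ofReal (c₀ * x⁻¹) := (setLIntegral_const _ _).symm
      _ ≤ ∫⁻ y in Icc x (x + 1), f (x, y) := by
          apply setLIntegral_mono (hfm.comp measurable_prodMk_left) step
      _ ≤ ∫⁻ y, f (x, y) := setLIntegral_le_lintegral _ _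
  -- outer divergence
  have hdiv : ∫⁻ x in Ici (2:ℝ), ENNReal.ofReal (c₀ * x⁻¹) = ⊤ := by
    by_contra hne
    have hIO : IntegrableOn (fun x : ℝ => c₀ * x⁻¹) (Ici (2:ℝ)) := by
      constructor
      · exact (measurable_inv.const_mul c₀).aestronglyMeasurable
      · rw [hasFiniteIntegral_iff_ofReal]
        · exact lt_top_iff_ne_top.2 hne
        · show ∀ᵐ x ∂volume.restrict (Ici (2:ℝ)), (0:ℝ) ≤ c₀ * x⁻¹
          rw [ae_restrict_iff' measurableSet_Ici]
          refine Filter.Eventually.of_forall (fun x hx => ?_)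
          have hx0 : (0:ℝ) < x := lt_of_lt_of_le two_pos hx
          positivity
    have hIO2 : IntegrableOn (fun x : ℝ => x ^ (-1:ℝ)) (Ioi (2:ℝ)) := by
      have h1 := (integrableOn_Ici_iff_integrableOn_Ioi).mp hIO
      have h2 := h1.const_mul c₀⁻¹
      apply h2.congr
      refine Filter.Eventually.of_forall (fun x => ?_)
      show c₀⁻¹ * (c₀ * x⁻¹) = x ^ (-1:ℝ)
      rw [Real.rpow_neg_one]
      field_simp
    rw [integrableOn_Ioi_rpow_iff two_pos] at hIO2
    linarith
  have htop : (⊤ : ENNReal) ≤ ∫⁻ w, f w := by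
    rw [Measure.volume_eq_prod, lintegral_prod f hfm.aemeasurable]
    calc (⊤ : ENNReal) = ∫⁻ x in Ici (2:ℝ), ENNReal.ofReal (c₀ * x⁻¹) := hdiv.symm
      _ ≤ ∫⁻ x in Ici (2:ℝ), ∫⁻ y, f (x, y) := by
          apply setLIntegral_mono (Measurable.lintegral_prod_right (f := fun x y => f (x, y)) hfm)
            (fun x hx => hinner x hx)
      _ ≤ ∫⁻ x, ∫⁻ y, f (x, y) := setLIntegral_le_lintegral _ _
  exact absurd hfin (by simp [top_le_iff.mp htop])


lemma yes_integrable (p α β : ℝ) (hp : 1 ≤ p) (hβ : 1 / p < β) :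
    MeasureTheory.Integrable (fun z : ℂ =>
      Complex.abs ((z ^ 2 - 1) / ((Real.pi : ℂ) * z ^ 2) * Complex.sin ((Real.pi : ℂ) * z ^ 2 / 2)) ^ p *
        (((1 + (Complex.abs z) ^ 2) / (1 + |(z ^ 2).im|)) ^ (α * p) *
          ((1 + Complex.abs z) ^ (-(p * β)) *
            Real.exp (-(p * Real.pi / 2) * (Complex.abs z) ^ 2)))) := by
  have hp0 : (0:ℝ) < p := lt_of_lt_of_le one_pos hp
  have hq : 1 < p * β := by
    have := (div_lt_iff₀ hp0).mp hβ
    nlinarith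
  have hc : (0:ℝ) < p * Real.pi / 4 := by positivity
  obtain ⟨K₁, hK₁0, hK₁⟩ := poly_le_exp (mul_nonneg (abs_nonneg α) hp0.le) hc
  have hH1 := H1_integrable (c := p * Real.pi / 4) (q := p * β) hc hq
  have hH2 := H2_integrable (c := p * Real.pi / 4) (q := p * β) hc hq
  have hg : Integrable (fun z : ℂ => (5 ^ p * K₁ * 2 ^ (p * β)) *
      (Real.exp (-(p * Real.pi / 4) * (z.re - z.im) ^ 2) * (1 + |z.re + z.im|) ^ (-(p * β)) +
       Real.exp (-(p * Real.pi / 4) * (z.re + z.im) ^ 2) * (1 + |z.re - z.im|) ^ (-(p * β)))) :=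
    (hH1.add hH2).const_mul _
  have hFmeas : Measurable (fun z : ℂ =>
      Complex.abs ((z ^ 2 - 1) / ((Real.pi : ℂ) * z ^ 2) * Complex.sin ((Real.pi : ℂ) * z ^ 2 / 2)) ^ p *
        (((1 + (Complex.abs z) ^ 2) / (1 + |(z ^ 2).im|)) ^ (α * p) *
          ((1 + Complex.abs z) ^ (-(p * β)) *
            Real.exp (-(p * Real.pi / 2) * (Complex.abs z) ^ 2)))) := by
    simp only [← Complex.norm_eq_abs]
    fun_prop
  apply hg.mono' hFmeas.aestronglyMeasurable
  refine Filter.Eventually.of_forall (fun z => ?_)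
  have hnn : (0:ℝ) ≤ Complex.abs ((z ^ 2 - 1) / ((Real.pi : ℂ) * z ^ 2)
      * Complex.sin ((Real.pi : ℂ) * z ^ 2 / 2)) ^ p *
        (((1 + (Complex.abs z) ^ 2) / (1 + |(z ^ 2).im|)) ^ (α * p) *
          ((1 + Complex.abs z) ^ (-(p * β)) *
            Real.exp (-(p * Real.pi / 2) * (Complex.abs z) ^ 2))) := by
    apply mul_nonneg (Real.rpow_nonneg (Complex.abs.nonneg _) _)
    positivity
  rw [Real.norm_eq_abs, abs_of_nonneg hnn]
  exact pointwise_bound p α β K₁ hp (by linarith) hK₁0.le hK₁ z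

end Stmt12Aux

theorem stmt12 (p α β : ℝ) (hp : 1 ≤ p) :
    MeasureTheory.Integrable (fun z : ℂ =>
      ‖(z ^ 2 - 1) / ((Real.pi : ℂ) * z ^ 2) * Complex.sin ((Real.pi : ℂ) * z ^ 2 / 2)‖ ^ p *
        (((1 + ‖z‖ ^ 2) / (1 + |(z ^ 2).im|)) ^ (α * p) *
          ((1 + ‖z‖) ^ (-(p * β)) *
            Real.exp (-(p * Real.pi / 2) * ‖z‖ ^ 2)))) ↔ 1 / p < β := by
  simp only [Complex.norm_eq_abs]
  constructor
  · intro h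
    by_contra hc
    push_neg at hc
    exact Stmt12Aux.not_integrable p α β hp hc h
  · intro h
    exact Stmt12Aux.yes_integrable p α β hp h
end

section
/- Suppose h is an entire function and there exist constants C, M > 0 and ν̂ ∈ ℝ such that |h(z)| (1+|Im z|)^M (1+|z|)^{−(ν−ν̂+M)} dist(z, Λ) ≤ C for all z ∈ ℂ, where Λ is a separated sequence (inf of pairwise distances positive). Then h is a polynomial. -/
open Metric Complex Polynomial Finset

theorem stmt14 (h : ℂ → ℂ) (hh : Differentiable ℂ h) (Λ : ℕ → ℂ)
    (hsep : ∃ ε > (0 : ℝ), ∀ m n, m ≠ n → ε ≤ dist (Λ m) (Λ n))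
    (C M ν νhat : ℝ) (hC : 0 < C) (hM : 0 < M)
    (hbd : ∀ z : ℂ, ‖h z‖ * (1 + |z.im|) ^ M *
      (1 + ‖z‖) ^ (-(ν - νhat + M)) * Metric.infDist z (Set.range Λ) ≤ C) :
    ∃ P : Polynomial ℂ, ∀ z, h z = P.eval z := by
  obtain ⟨ε, hε, hsep⟩ := hsep
  have hSne : (Set.range Λ).Nonempty := ⟨Λ 0, Set.mem_range_self 0⟩
  obtain ⟨k, hk⟩ := exists_nat_ge (max (ν - νhat + M) 0)
  -- Step 1: good circles around every point
  have key : ∀ z : ℂ, ∃ r : ℝ, ε / 8 ≤ r ∧ r ≤ 3 * ε / 8 ∧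
      ∀ w : ℂ, dist w z = r → ε / 8 ≤ infDist w (Set.range Λ) := by
    intro z
    have circ : ∀ r : ℝ, (∀ n, ε / 8 ≤ |dist z (Λ n) - r|) →
        ∀ w : ℂ, dist w z = r → ε / 8 ≤ infDist w (Set.range Λ) := by
      intro r hr w hw
      refine le_of_not_gt fun hlt => ?_
      obtain ⟨y, hy, hdy⟩ := (infDist_lt_iff hSne).mp hlt
      obtain ⟨n, rfl⟩ := hy
      have h1 := hr n
      have h2 : |dist z (Λ n) - dist w (Λ n)| ≤ dist z w := abs_dist_sub_le z w (Λ n)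
      have h3 : dist z w = r := by rw [dist_comm]; exact hw
      have h4 : dist w z ≤ dist w (Λ n) + dist (Λ n) z := dist_triangle w (Λ n) z
      have h5 : dist (Λ n) z = dist z (Λ n) := dist_comm _ _
      rw [abs_le] at h2
      rcases abs_cases (dist z (Λ n) - r) with ⟨he, _⟩ | ⟨he, _⟩ <;> linarith
    by_cases hcase : ∀ n, ε / 8 ≤ |dist z (Λ n) - ε / 8|
    · exact ⟨ε / 8, le_refl _, by linarith, circ _ hcase⟩
    · push_neg at hcase
      obtain ⟨n1, hn1⟩ := hcase
      have hd1 : dist z (Λ n1) < ε / 4 := by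
        rcases abs_cases (dist z (Λ n1) - ε / 8) with ⟨he, _⟩ | ⟨he, _⟩ <;> linarith
      refine ⟨3 * ε / 8, by linarith, le_refl _, circ _ fun n => ?_⟩
      by_cases hn : n = n1
      · subst hn
        have : 0 ≤ dist z (Λ n) := dist_nonneg
        rcases abs_cases (dist z (Λ n) - 3 * ε / 8) with ⟨he, _⟩ | ⟨he, _⟩ <;> linarith
      · have h1 := hsep n n1 hn
        have h2 := dist_triangle (Λ n) z (Λ n1)
        have h3 : dist (Λ n) z = dist z (Λ n) := dist_comm _ _
        rcases abs_cases (dist z (Λ n) - 3 * ε / 8) with ⟨he, _⟩ | ⟨he, _⟩ <;> linarith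
  -- Step 2: pointwise bound away from Λ
  have hpt : ∀ w : ℂ, ε / 8 ≤ infDist w (Set.range Λ) →
      ‖h w‖ ≤ 8 * C / ε * (1 + ‖w‖) ^ k := by
    intro w hw
    have hB : (0:ℝ) < (1 + ‖w‖) ^ (-(ν - νhat + M)) :=
      Real.rpow_pos_of_pos (by positivity) _
    have hA : (1:ℝ) ≤ (1 + |w.im|) ^ M :=
      Real.one_le_rpow (by linarith [abs_nonneg w.im]) hM.le
    have hbase : (0:ℝ) < 1 + ‖w‖ := by positivity
    have hX : ‖h w‖ * (1 + ‖w‖) ^ (-(ν - νhat + M)) * (ε / 8) ≤ C := by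
      have h0 : (0:ℝ) ≤ ‖h w‖ * (1 + ‖w‖) ^ (-(ν - νhat + M)) := by
        positivity
      have hd0 : (0:ℝ) ≤ infDist w (Set.range Λ) := infDist_nonneg
      calc ‖h w‖ * (1 + ‖w‖) ^ (-(ν - νhat + M)) * (ε / 8)
          ≤ ‖h w‖ * (1 + ‖w‖) ^ (-(ν - νhat + M)) *
            infDist w (Set.range Λ) := mul_le_mul_of_nonneg_left hw h0
        _ ≤ ‖h w‖ * (1 + |w.im|) ^ M *
            (1 + ‖w‖) ^ (-(ν - νhat + M)) * infDist w (Set.range Λ) := by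
            nlinarith [mul_nonneg h0 hd0, sub_nonneg.mpr hA]
        _ ≤ C := hbd w
    have hXle : ‖h w‖ * (1 + ‖w‖) ^ (-(ν - νhat + M)) ≤ 8 * C / ε := by
      rw [le_div_iff₀ hε]
      nlinarith [hX]
    have hpow := Real.rpow_pos_of_pos hbase (ν - νhat + M)
    have hinv : ‖h w‖ ≤ 8 * C / ε * (1 + ‖w‖) ^ (ν - νhat + M) := by
      rw [Real.rpow_neg hbase.le, ← div_eq_mul_inv, div_le_iff₀ hpow] at hXle
      linarith
    calc ‖h w‖ ≤ 8 * C / ε * (1 + ‖w‖) ^ (ν - νhat + M) := hinv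
      _ ≤ 8 * C / ε * (1 + ‖w‖) ^ (k:ℝ) := by
          apply mul_le_mul_of_nonneg_left _ (by positivity)
          apply Real.rpow_le_rpow_of_exponent_le (by linarith [norm_nonneg w])
          exact le_trans (le_max_left _ _) hk
      _ = 8 * C / ε * (1 + ‖w‖) ^ k := by rw [Real.rpow_natCast]
  -- Step 3: global polynomial growth via maximum modulus
  have hgrow : ∀ z : ℂ, ‖h z‖ ≤ 8 * C / ε * (1 + ε) ^ k * (1 + ‖z‖) ^ k := by
    intro z
    obtain ⟨r, hr1, hr2, hr3⟩ := key z
    have hr0 : 0 < r := lt_of_lt_of_le (by positivity) hr1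
    refine Complex.norm_le_of_forall_mem_frontier_norm_le isBounded_ball
      hh.diffContOnCl (fun w hw => ?_) (subset_closure (mem_ball_self hr0))
    rw [frontier_ball z hr0.ne'] at hw
    have hwz : dist w z = r := mem_sphere.mp hw
    have hb := hpt w (hr3 w hwz)
    have hwb : ‖w‖ ≤ ‖z‖ + r := by
      have h6 : ‖w‖ - ‖z‖ ≤ ‖w - z‖ := norm_sub_norm_le w z
      have h7 : ‖w - z‖ = r := by rw [← dist_eq_norm]; exact hwz
      have h8 : ‖w‖ = ‖w‖ := rfl
      have h9 : ‖z‖ = ‖z‖ := rfl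
      rw [h8, h9]; linarith
    have h1w : 1 + ‖w‖ ≤ (1 + ε) * (1 + ‖z‖) := by
      have h0 : 0 ≤ ‖z‖ := norm_nonneg _
      nlinarith
    calc ‖h w‖ = ‖h w‖ := rfl
      _ ≤ 8 * C / ε * (1 + ‖w‖) ^ k := hb
      _ ≤ 8 * C / ε * ((1 + ε) * (1 + ‖z‖)) ^ k := by
          apply mul_le_mul_of_nonneg_left _ (by positivity)
          exact pow_le_pow_left₀ (by positivity) h1w k
      _ = 8 * C / ε * (1 + ε) ^ k * (1 + ‖z‖) ^ k := by rw [mul_pow]; ring_nf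
  -- Step 4: the power series has finitely many nonzero coefficients
  set C2 : ℝ := 8 * C / ε * (1 + ε) ^ k with hC2
  have hC2pos : 0 < C2 := by positivity
  set p : FormalMultilinearSeries ℂ ℂ ℂ := cauchyPowerSeries h 0 1 with hpdef
  have hps : HasFPowerSeriesOnBall h p 0 ⊤ := by
    have := hh.hasFPowerSeriesOnBall (R := 1) 0 one_pos
    simpa using this
  have hcoeff : ∀ n, k < n → p n = 0 := by
    intro n hn
    have hbnd : ∀ R : ℝ, 1 ≤ R → ‖p n‖ * R ≤ C2 * 2 ^ k := by
      intro R hR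
      have hR0 : 0 < R := by linarith
      have hps' : HasFPowerSeriesOnBall h (cauchyPowerSeries h 0 R) 0 ⊤ := by
        have := hh.hasFPowerSeriesOnBall (R := R.toNNReal) 0 (by simp [hR0])
        rwa [Real.coe_toNNReal _ hR0.le] at this
      have hpeq : p = cauchyPowerSeries h 0 R :=
        hps.hasFPowerSeriesAt.eq_formalMultilinearSeries hps'.hasFPowerSeriesAt
      have hest := norm_cauchyPowerSeries_le h 0 R n
      rw [← hpeq] at hest
      have hIb : ∫ θ : ℝ in (0)..2 * Real.pi, ‖h (circleMap 0 R θ)‖ ≤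
          2 * Real.pi * (C2 * (2 * R) ^ k) := by
        have hmono : ∀ θ ∈ Set.uIcc (0:ℝ) (2 * Real.pi),
            ‖h (circleMap 0 R θ)‖ ≤ C2 * (2 * R) ^ k := by
          intro θ _
          have := hgrow (circleMap 0 R θ)
          have hcm : ‖circleMap 0 R θ‖ = R := by
            rw [show ‖circleMap 0 R θ‖ = ‖circleMap 0 R θ‖ from rfl,
              norm_circleMap_zero, abs_of_pos hR0]
          rw [hcm] at this
          refine this.trans ?_
          rw [hC2]
          apply mul_le_mul_of_nonneg_left _ (by positivity)
          apply pow_le_pow_left₀ (by positivity)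
          linarith
        calc ∫ θ : ℝ in (0)..2 * Real.pi, ‖h (circleMap 0 R θ)‖
            ≤ ∫ _θ : ℝ in (0)..2 * Real.pi, C2 * (2 * R) ^ k := by
              apply intervalIntegral.integral_mono_on Real.two_pi_pos.le
              · exact ((hh.continuous.comp (continuous_circleMap 0 R)).norm).intervalIntegrable _ _
              · exact intervalIntegrable_const
              · intro θ hθ
                exact hmono θ (by rw [Set.uIcc_of_le Real.two_pi_pos.le]; exact hθ)
          _ = 2 * Real.pi * (C2 * (2 * R) ^ k) := by
              rw [intervalIntegral.integral_const, smul_eq_mul]; ring_nf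
      have habsR : |R| = R := abs_of_pos hR0
      have hRk : ‖p n‖ ≤ C2 * (2 * R) ^ k * (R⁻¹) ^ n := by
        refine hest.trans ?_
        rw [habsR]
        apply mul_le_mul_of_nonneg_right _ (by positivity)
        calc (2 * Real.pi)⁻¹ * ∫ θ : ℝ in (0)..2 * Real.pi, ‖h (circleMap 0 R θ)‖
            ≤ (2 * Real.pi)⁻¹ * (2 * Real.pi * (C2 * (2 * R) ^ k)) := by
              apply mul_le_mul_of_nonneg_left hIb (by positivity)
          _ = C2 * (2 * R) ^ k := by
              field_simp
      have hfin : C2 * (2 * R) ^ k * (R⁻¹) ^ n * R ≤ C2 * 2 ^ k := by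
        have hRpow : R ^ (k + 1) ≤ R ^ n := pow_le_pow_right₀ hR hn
        have h2 : (2 * R) ^ k = 2 ^ k * R ^ k := mul_pow 2 R k
        rw [h2, inv_pow]
        rw [show C2 * (2 ^ k * R ^ k) * (R ^ n)⁻¹ * R = C2 * 2 ^ k * (R ^ (k+1) / R ^ n) by
          rw [pow_succ]; field_simp]
        calc C2 * 2 ^ k * (R ^ (k+1) / R ^ n) ≤ C2 * 2 ^ k * 1 := by
              apply mul_le_mul_of_nonneg_left _ (by positivity)
              rw [div_le_one (by positivity)]; exact hRpow
          _ = C2 * 2 ^ k := mul_one _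
      calc ‖p n‖ * R ≤ C2 * (2 * R) ^ k * (R⁻¹) ^ n * R :=
            mul_le_mul_of_nonneg_right hRk hR0.le
        _ ≤ C2 * 2 ^ k := hfin
    have hnorm0 : ‖p n‖ = 0 := by
      by_contra h0
      have hpos : 0 < ‖p n‖ := (norm_nonneg _).lt_of_ne (Ne.symm h0)
      have hC3 : (0:ℝ) ≤ C2 * 2 ^ k := by positivity
      have hb1 := hbnd (max 1 ((C2 * 2 ^ k + 1) / ‖p n‖)) (le_max_left _ _)
      have hb2 : ‖p n‖ * ((C2 * 2 ^ k + 1) / ‖p n‖) ≤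
          ‖p n‖ * max 1 ((C2 * 2 ^ k + 1) / ‖p n‖) :=
        mul_le_mul_of_nonneg_left (le_max_right _ _) hpos.le
      rw [mul_div_cancel₀ _ (ne_of_gt hpos)] at hb2
      linarith
    exact norm_eq_zero.mp hnorm0
  -- Step 5: conclude
  refine ⟨∑ i ∈ Finset.range (k + 1), Polynomial.C (p.coeff i) * Polynomial.X ^ i, fun z => ?_⟩
  have hsum : HasSum (fun n : ℕ => p n fun _ : Fin n => z) (h (0 + z)) :=
    hps.hasSum (by simp)
  have hsum2 : HasSum (fun n : ℕ => p n fun _ : Fin n => z)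
      (∑ n ∈ Finset.range (k + 1), p n fun _ : Fin n => z) := by
    apply hasSum_sum_of_ne_finset_zero
    intro n hn
    rw [hcoeff n (by simpa using hn)]
    rfl
  have heq := hsum.unique hsum2
  rw [zero_add] at heq
  rw [heq]
  rw [Polynomial.eval_finset_sum]
  apply Finset.sum_congr rfl
  intro n _
  rw [FormalMultilinearSeries.apply_eq_pow_smul_coeff]
  simp [smul_eq_mul]
  ring
end

section
/- If there exists a positive integer N such that sup_{n≥0} ((n+1)/N) |Σ_{k=n+1}^{n+N} Δ_k| < c for some c > 0, then limsup_{M→∞} (1/log M) |Σ_{k=1}^{M} Δ_k| ≤ c, where (Δ_k) is a sequence of real numbers. -/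
open Finset Filter Real

theorem stmt17 (Δ : ℕ → ℝ) (N : ℕ) (hN : 0 < N) (c : ℝ) (hc : 0 < c)
    (h : ∀ n : ℕ, ((n + 1 : ℝ) / N) * |∑ k ∈ Finset.Icc (n + 1) (n + N), Δ k| < c) :
    Filter.limsup (fun M : ℕ => (1 / Real.log M) * |∑ k ∈ Finset.Icc 1 M, Δ k|)
      Filter.atTop ≤ c := by
  set S : ℕ → ℝ := fun m => ∑ k ∈ Finset.Icc 1 m, Δ k with hSdef
  -- block bound
  have hblock : ∀ n : ℕ, |S (n + N) - S n| ≤ c * N / (n + 1) := by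
    intro n
    have hsum : S n + ∑ k ∈ Finset.Ioc n (n + N), Δ k = S (n + N) := by
      simp only [hSdef, ← Finset.Icc_add_one_left_eq_Ioc 0]
      exact Finset.sum_Ioc_consecutive Δ (Nat.zero_le n) (Nat.le_add_right n N)
    have h2 : |∑ k ∈ Finset.Icc (n + 1) (n + N), Δ k| ≤ c * N / (n + 1) := by
      have hn := h n
      have hNpos : (0 : ℝ) < N := by exact_mod_cast hN
      have hnpos : (0 : ℝ) < (n : ℝ) + 1 := by positivity
      rw [div_mul_eq_mul_div, div_lt_iff₀ hNpos] at hn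
      rw [le_div_iff₀ hnpos]
      nlinarith [abs_nonneg (∑ k ∈ Finset.Icc (n + 1) (n + N), Δ k)]
    have : S (n + N) - S n = ∑ k ∈ Finset.Icc (n + 1) (n + N), Δ k := by
      rw [← hsum]; rw [Finset.Icc_add_one_left_eq_Ioc]; ring
    rw [this]; exact h2
  -- iterate the block bound
  have key : ∀ (r q : ℕ), |S (r + q * N)| ≤ |S r| + c * ∑ j ∈ Finset.range q, (N : ℝ) / (j * N + 1) := by
    intro r q
    induction q with
    | zero => simp
    | succ q ih =>
      have hb := hblock (r + q * N)
      have hle : c * N / ((r : ℝ) + q * N + 1) ≤ c * N / ((q : ℝ) * N + 1) := by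
        apply div_le_div_of_nonneg_left (by positivity) (by positivity)
        have : (0:ℝ) ≤ (r:ℝ) := Nat.cast_nonneg r
        linarith
      have h1 : |S (r + (q + 1) * N)| ≤ |S (r + q * N)| + c * N / ((q : ℝ) * N + 1) := by
        have heq : r + (q + 1) * N = r + q * N + N := by ring
        rw [heq]
        calc |S (r + q * N + N)| ≤ |S (r + q * N)| + |S (r + q * N + N) - S (r + q * N)| := by
              have := abs_add_le (S (r + q * N)) (S (r + q * N + N) - S (r + q * N))
              simpa using this
          _ ≤ |S (r + q * N)| + c * N / ((r : ℝ) + q * N + 1) := by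
              refine add_le_add_right ?_ _
              have := hblock (r + q * N)
              convert this using 3 <;> push_cast <;> ring
          _ ≤ _ := add_le_add_right hle _
      rw [Finset.sum_range_succ, mul_add]
      calc |S (r + (q + 1) * N)| ≤ |S (r + q * N)| + c * N / ((q : ℝ) * N + 1) := h1
        _ ≤ |S r| + c * ∑ j ∈ Finset.range q, (N : ℝ) / (j * N + 1) + c * N / ((q : ℝ) * N + 1) :=
            add_le_add_left ih _
        _ ≤ _ := by rw [add_assoc]; apply add_le_add_right; apply add_le_add_right;
                    rw [mul_div_assoc]
  -- bound on the logarithmic-type sum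
  have hsumlog : ∀ q : ℕ, ∑ j ∈ Finset.range q, (N : ℝ) / (j * N + 1) ≤ (N : ℝ) + 1 + Real.log q := by
    intro q
    rcases Nat.eq_zero_or_pos q with hq | hq
    · subst hq; simp; positivity
    · obtain ⟨q', rfl⟩ := Nat.exists_eq_add_of_lt hq
      rw [zero_add]
      rw [Finset.sum_range_succ']
      have h0 : ((0:ℕ) : ℝ) * N + 1 = 1 := by norm_num
      have hmain : ∑ j ∈ Finset.range q', (N : ℝ) / ((j + 1 : ℕ) * N + 1) ≤ (harmonic q' : ℝ) := by
        rw [harmonic]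
        push_cast
        apply Finset.sum_le_sum
        intro i _
        rw [inv_eq_one_div, div_le_div_iff₀ (by positivity) (by positivity)]
        have hN1 : (1:ℝ) ≤ (N:ℝ) := by exact_mod_cast hN
        have : (0:ℝ) ≤ (i:ℝ) := Nat.cast_nonneg i
        nlinarith
      have hharm : (harmonic q' : ℝ) ≤ 1 + Real.log q' := harmonic_le_one_add_log q'
      have hlog : Real.log q' ≤ Real.log (q' + 1 : ℕ) := by
        rcases Nat.eq_zero_or_pos q' with h0' | h0'
        · subst h0'; simp
        · apply Real.log_le_log (by exact_mod_cast h0')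
          exact_mod_cast Nat.le_succ q'
      push_cast at hlog hmain ⊢
      norm_num
      linarith
  -- constant
  set C0 : ℝ := ∑ r ∈ Finset.range N, |S r| with hC0
  have hC0nonneg : 0 ≤ C0 := Finset.sum_nonneg fun _ _ => abs_nonneg _
  set K : ℝ := C0 + c * ((N : ℝ) + 1) with hK
  have hKnonneg : 0 ≤ K := by positivity
  -- main bound
  have hmain : ∀ M : ℕ, 1 ≤ M → |S M| ≤ K + c * Real.log M := by
    intro M hM
    have hMeq : M % N + (M / N) * N = M := by
      rw [mul_comm]; exact Nat.mod_add_div M N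
    have h1 : |S M| ≤ |S (M % N)| + c * ∑ j ∈ Finset.range (M / N), (N : ℝ) / (j * N + 1) := by
      conv_lhs => rw [← hMeq]
      exact key (M % N) (M / N)
    have h2 : |S (M % N)| ≤ C0 := by
      rw [hC0]
      exact Finset.single_le_sum (f := fun r => |S r|) (fun _ _ => abs_nonneg _)
        (Finset.mem_range.mpr (Nat.mod_lt M hN))
    have h3 : ∑ j ∈ Finset.range (M / N), (N : ℝ) / (j * N + 1) ≤ (N : ℝ) + 1 + Real.log (M / N : ℕ) :=
      hsumlog (M / N)
    have h4 : Real.log ((M / N : ℕ) : ℝ) ≤ Real.log M := by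
      rcases Nat.eq_zero_or_pos (M / N) with h0' | h0'
      · rw [h0']; simp
        exact Real.log_nonneg (by exact_mod_cast hM)
      · apply Real.log_le_log (by exact_mod_cast h0')
        exact_mod_cast Nat.div_le_self M N
    have h3' : ∑ j ∈ Finset.range (M / N), (N : ℝ) / (j * N + 1) ≤ (N : ℝ) + 1 + Real.log M :=
      h3.trans (by linarith)
    have := add_le_add h2 (mul_le_mul_of_nonneg_left h3' hc.le)
    rw [hK]
    calc |S M| ≤ C0 + c * ((N : ℝ) + 1 + Real.log M) := h1.trans this
      _ = C0 + c * ((N : ℝ) + 1) + c * Real.log M := by ring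
  -- conclude
  have hnonneg : ∀ M : ℕ, 0 ≤ (1 / Real.log M) * |S M| := by
    intro M
    rcases Nat.eq_zero_or_pos M with h0 | h0
    · subst h0; simp
    · have : 0 ≤ Real.log M := Real.log_nonneg (by exact_mod_cast h0)
      positivity
  have hcobdd : IsCoboundedUnder (· ≤ ·) atTop (fun M : ℕ => (1 / Real.log M) * |S M|) :=
    isCoboundedUnder_le_of_le atTop hnonneg
  apply le_of_forall_pos_le_add
  intro ε hε
  apply Filter.limsup_le_of_le hcobdd
  have hlogtop : Tendsto (fun M : ℕ => Real.log M) atTop atTop :=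
    Real.tendsto_log_atTop.comp tendsto_natCast_atTop_atTop
  filter_upwards [hlogtop.eventually_ge_atTop (K / ε), hlogtop.eventually_gt_atTop 0,
    eventually_ge_atTop 1] with M hM1 hM2 hM3
  have hSM : |S M| ≤ K + c * Real.log M := hmain M hM3
  rw [one_div, inv_mul_eq_div, div_le_iff₀ hM2]
  have hKle : K ≤ ε * Real.log M := by
    have := (div_le_iff₀ hε).mp hM1; linarith
  calc |S M| ≤ K + c * Real.log M := hSM
    _ ≤ ε * Real.log M + c * Real.log M := by linarith
    _ = (c + ε) * Real.log M := by ring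
end
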